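/- arXiv:math/0505598 — 7 statements merged into one kernel-verified Lean document; each statement's English description precedes it below -/
import Mathlib

section
/- Every g ∈ G(𝔐_k) (for any 0 ≤ k ≤ p+2) maps the subspace 𝒦 := Span{X*, Y*, Z₁*,…,Z_p*, Ỹ*, Z̃₁*,…,Z̃_p*} onto itself. -/
/-- Index type for the basis {X, Y, Z_1,...,Z_p, Ỹ, Z̃_1,...,Z̃_p} of V = ℝ^{3+2p}. -/
inductive Idx (p : ℕ) : Type where
  | X : Idx p
  | Y : Idx p
  | Z : Fin p → Idx p
  | Yt : Idx p
  | Zt : Fin p → Idx p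
  deriving DecidableEq, Fintype

/-- V := ℝ^{3+2p}, realized as functions on the index set. -/
abbrev V (p : ℕ) : Type := Idx p → ℝ

/-- The basis vectors of `V p`. -/
noncomputable def e (p : ℕ) (a : Idx p) : V p := fun b => if b = a then 1 else 0

/-- `T p k` is the totally symmetric multilinear form (with the first two of its `k+2`
arguments singled out) so that `B^k(u,v,w,x;η) = u_X x_X T(v,w,η) - ...`.
For `1 ≤ k ≤ p` its nonzero components are: one argument is `Z_k`, the others `Y`;
for `k = 0` the nonzero components are `T(Y,Ỹ) = T(Z_i,Z̃_i) = 1`;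
for `k > p` (used for `k = p+1, p+2`) the only nonzero component has all arguments `Y`. -/
noncomputable def T (p k : ℕ) (a b : V p) (η : Fin k → V p) : ℝ :=
  if hk : 1 ≤ k ∧ k ≤ p then
    (a (Idx.Z ⟨k - 1, by omega⟩) * b Idx.Y + a Idx.Y * b (Idx.Z ⟨k - 1, by omega⟩)) *
        ∏ j, η j Idx.Y +
      a Idx.Y * b Idx.Y *
        ∑ j, η j (Idx.Z ⟨k - 1, by omega⟩) * ∏ l ∈ Finset.univ.erase j, η l Idx.Y
  else if k = 0 then
    a Idx.Y * b Idx.Yt + b Idx.Y * a Idx.Yt +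
      ∑ i : Fin p, (a (Idx.Z i) * b (Idx.Zt i) + b (Idx.Z i) * a (Idx.Zt i))
  else a Idx.Y * b Idx.Y * ∏ j, η j Idx.Y

/-- The tensor `B^k ∈ ⊗^{4+k} V*`: it has the curvature symmetries in the first four
arguments, is totally symmetric in the last `k`, and its nonzero components on basis
vectors, up to these symmetries, are exactly those prescribed in the paper:
`B⁰(X,Y,Ỹ,X) = B⁰(X,Z_i,Z̃_i,X) = 1`;
`B^k(X,Y,Z_k,X;Y,…,Y) = B^k(X,Y,Y,X;Z_k,Y,…,Y) = … = B^k(X,Y,Y,X;Y,…,Y,Z_k) = 1` for `1 ≤ k ≤ p`;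
`B^{p+1}(X,Y,Y,X;Y,…,Y) = 1` and `B^{p+2}(X,Y,Y,X;Y,…,Y) = 1`. -/
noncomputable def Bc (p k : ℕ) (u v w x : V p) (η : Fin k → V p) : ℝ :=
  u Idx.X * x Idx.X * T p k v w η - u Idx.X * w Idx.X * T p k v x η -
    v Idx.X * x Idx.X * T p k u w η + v Idx.X * w Idx.X * T p k u x η

/-- `GA p k g` means `g ∈ G(𝔄_k)`, i.e. the invertible linear map `g` of `V` satisfies
`g* B^i = B^i` for all `0 ≤ i ≤ k`. -/
def GA (p k : ℕ) (g : V p ≃ₗ[ℝ] V p) : Prop :=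
  ∀ i, i ≤ k → ∀ u v w x : V p, ∀ η : Fin i → V p,
    Bc p i (g u) (g v) (g w) (g x) (fun j => g (η j)) = Bc p i u v w x η

/-- Ṽ := ℝ^{6+4p}; `Sum.inl a` labels the unstarred basis vectors and `Sum.inr a` the
starred ones. -/
abbrev Vt (p : ℕ) : Type := (Idx p ⊕ Idx p) → ℝ

/-- The basis vectors of `Ṽ`. -/
noncomputable def et (p : ℕ) (s : Idx p ⊕ Idx p) : Vt p := fun b => if b = s then 1 else 0

/-- The projection Ṽ → V killing the starred basis vectors. -/
def prj (p : ℕ) (u : Vt p) : V p := fun a => u (Sum.inl a)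

/-- The tensor `A^k` on Ṽ: the pullback of `B^k` under the projection `prj`. -/
noncomputable def Ac (p k : ℕ) (u v w x : Vt p) (η : Fin k → Vt p) : ℝ :=
  Bc p k (prj p u) (prj p v) (prj p w) (prj p x) fun j => prj p (η j)

/-- The hyperbolic inner product ⟨·,·⟩ on Ṽ pairing each unstarred basis vector with the
corresponding starred one. -/
noncomputable def ipt (p : ℕ) (u v : Vt p) : ℝ :=
  ∑ a : Idx p, (u (Sum.inl a) * v (Sum.inr a) + u (Sum.inr a) * v (Sum.inl a))

/-- `GM p k g` means `g ∈ G(𝔐_k)`: the invertible linear map `g` of `Ṽ` preserves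
⟨·,·⟩ and satisfies `g* A^i = A^i` for all `0 ≤ i ≤ k`. -/
def GM (p k : ℕ) (g : Vt p ≃ₗ[ℝ] Vt p) : Prop :=
  (∀ u v : Vt p, ipt p (g u) (g v) = ipt p u v) ∧
    ∀ i, i ≤ k → ∀ u v w x : Vt p, ∀ η : Fin i → Vt p,
      Ac p i (g u) (g v) (g w) (g x) (fun j => g (η j)) = Ac p i u v w x η

-- AUX START
lemma T_zero (p : ℕ) (a b : V p) (η : Fin 0 → V p) :
    T p 0 a b η = a Idx.Y * b Idx.Yt + b Idx.Y * a Idx.Yt +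
      ∑ i : Fin p, (a (Idx.Z i) * b (Idx.Zt i) + b (Idx.Z i) * a (Idx.Zt i)) := by
  simp [T]

lemma T_e_right (p : ℕ) (a : V p) (c : Idx p) (η : Fin 0 → V p) :
    T p 0 a (e p c) η =
      match c with
      | Idx.X => 0
      | Idx.Y => a Idx.Yt
      | Idx.Yt => a Idx.Y
      | Idx.Z i => a (Idx.Zt i)
      | Idx.Zt i => a (Idx.Z i) := by
  cases c <;> simp [T_zero, e, Finset.sum_ite_eq, Finset.sum_ite_eq']

lemma Kchar (p : ℕ) (u : Vt p) :
    (∀ a, u (Sum.inl a) = 0) ↔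
      ∀ v w x : Vt p, Ac p 0 u v w x (fun j => j.elim0) = 0 := by
  constructor
  · intro h v w x
    have h' : prj p u = fun _ => 0 := funext fun a => h a
    simp [Ac, Bc, h', T_zero]
  · intro H a
    have key : ∀ b c : Idx p,
        Ac p 0 u (et p (Sum.inl b)) (et p (Sum.inl c)) (et p (Sum.inl Idx.X))
          (fun j => j.elim0) = 0 := fun b c => H _ _ _
    have hip : ∀ b : Idx p, prj p (et p (Sum.inl b)) = e p b := by
      intro b; funext c; simp [prj, et, e]
    cases a with
    | X =>
      have := key Idx.Y Idx.Yt
      simp [Ac, Bc, hip, T_e_right, e, et, prj, T_zero] at this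
      simpa using this
    | Y =>
      have := key Idx.X Idx.Yt
      simp [Ac, Bc, hip, T_e_right, e, et, prj, T_zero] at this
      tauto
    | Yt =>
      have := key Idx.X Idx.Y
      simp [Ac, Bc, hip, T_e_right, e, et, prj, T_zero] at this
      tauto
    | Z i =>
      have := key Idx.X (Idx.Zt i)
      simp [Ac, Bc, hip, T_e_right, e, et, prj, T_zero] at this
      tauto
    | Zt i =>
      have := key Idx.X (Idx.Z i)
      simp [Ac, Bc, hip, T_e_right, e, et, prj, T_zero] at this
      tauto

lemma span_mem_iff (p : ℕ) (u : Vt p) :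
    u ∈ Submodule.span ℝ (Set.range fun a : Idx p => et p (Sum.inr a)) ↔
      ∀ a, u (Sum.inl a) = 0 := by
  constructor
  · intro hu
    induction hu using Submodule.span_induction with
    | mem x hx => obtain ⟨a, rfl⟩ := hx; intro b; simp [et]
    | zero => intro b; rfl
    | add x y hx hy ihx ihy => intro b; simp [Pi.add_apply, ihx b, ihy b]
    | smul c x hx ihx => intro b; simp [Pi.smul_apply, ihx b]
  · intro h
    have : u = ∑ a : Idx p, u (Sum.inr a) • et p (Sum.inr a) := by
      funext b
      cases b with
      | inl c => simp [et, h c, Finset.sum_apply]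
      | inr c => simp [et, Finset.sum_apply, Finset.sum_ite_eq, Finset.sum_ite_eq']
    rw [this]
    exact Submodule.sum_mem _ fun a _ =>
      Submodule.smul_mem _ _ (Submodule.subset_span ⟨a, rfl⟩)

/-- every `g ∈ G(𝔐_k)` (for `0 ≤ k ≤ p+2`) maps
𝒦 := Span{X*, Y*, Z_i*, Ỹ*, Z̃_i*} onto itself. -/
theorem statement1 (p : ℕ) (hp : 1 ≤ p) (k : ℕ) (hk : k ≤ p + 2)
    (g : Vt p ≃ₗ[ℝ] Vt p) (hg : GM p k g) :
    Submodule.map g.toLinearMap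
        (Submodule.span ℝ (Set.range fun a : Idx p => et p (Sum.inr a))) =
      Submodule.span ℝ (Set.range fun a : Idx p => et p (Sum.inr a)) := by
  have hA := hg.2 0 (Nat.zero_le k)
  have elimeq : ∀ η : Fin 0 → Vt p, (fun j : Fin 0 => g (η j)) = fun j : Fin 0 => j.elim0 :=
    fun η => funext fun j => j.elim0
  apply le_antisymm
  · refine Submodule.map_le_iff_le_comap.mpr fun u hu => ?_
    simp only [Submodule.mem_comap]
    have hu' := (Kchar p u).mp ((span_mem_iff p u).mp hu)
    refine (span_mem_iff p _).mpr ((Kchar p _).mpr fun v w x => ?_)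
    have := hA u (g.symm v) (g.symm w) (g.symm x) (fun j => j.elim0)
    rw [elimeq] at this
    simp only [LinearEquiv.apply_symm_apply] at this
    exact this.trans (hu' _ _ _)
  · intro u hu
    refine ⟨g.symm u, ?_, by simp⟩
    have hu' := (Kchar p u).mp ((span_mem_iff p u).mp hu)
    refine (span_mem_iff p _).mpr ((Kchar p _).mpr fun v w x => ?_)
    have := hA (g.symm u) v w x (fun j => j.elim0)
    rw [elimeq] at this
    simp only [LinearEquiv.apply_symm_apply] at this
    exact this.symm.trans (hu' _ _ _)
end

section
/- Order the unstarred basis as 𝒮 = (S₁,…,S_{3+2p}) = (X,Y,Z₁,…,Z_p,Ỹ,Z̃₁,…,Z̃_p) and the starred basis correspondingly as 𝒮* = (S₁*,…,S_{3+2p}*). Let g be a linear map of Ṽ of the block-triangular form gS_i = Σ_j (g₀)_{ij} S_j + Σ_j (g₁)_{ij} S_j* and gS_i* = Σ_j (g₂)_{ij} S_j*, for real (3+2p)×(3+2p) matrices g₀, g₁, g₂. Then for any 0 ≤ k ≤ p+2: g ∈ G(𝔐_k) if and only if (i) the linear map of V with matrix g₀ (in the basis (X,Y,Z_i,Ỹ,Z̃_i))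 lies in G(𝔄_k), (ii) the matrix γ := g₀ g₁ᵗ is skew-symmetric (γ + γᵗ = 0), and (iii) g₀ g₂ᵗ = Id. -/
section Aux

variable {p : ℕ}

lemma et_single (p : ℕ) (s : Idx p ⊕ Idx p) : et p s = Pi.single s 1 := by
  funext t; simp [et, Pi.single_apply]

lemma e_single (p : ℕ) (a : Idx p) : e p a = Pi.single a 1 := by
  funext t; simp [e, Pi.single_apply]

open Matrix

/-- ipt as a matrix bilinear form. -/
lemma ipt_matrix (p : ℕ) (u v : Vt p) :
    ipt p u v = u ⬝ᵥ ((Matrix.fromBlocks (0 : Matrix (Idx p) (Idx p) ℝ) 1 1 0) *ᵥ v) := by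
  simp [ipt, dotProduct, Matrix.mulVec, Fintype.sum_sum_type,
    Matrix.fromBlocks, Matrix.one_apply, Finset.mul_sum, mul_ite, mul_comm,
    Finset.sum_add_distrib]

lemma mat_ext {n : Type*} [Fintype n] [DecidableEq n] {M N : Matrix n n ℝ}
    (h : ∀ u v : n → ℝ, u ⬝ᵥ (M *ᵥ v) = u ⬝ᵥ (N *ᵥ v)) : M = N := by
  ext a b
  have := h (Pi.single a 1) (Pi.single b 1)
  simpa [Matrix.mulVec_single, single_dotProduct] using this

end Aux

open Matrix in
lemma dot_conj {n : Type*} [Fintype n] [DecidableEq n] (A B : Matrix n n ℝ) (u v : n → ℝ) :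
    (Aᵀ *ᵥ u) ⬝ᵥ (B *ᵥ (Aᵀ *ᵥ v)) = u ⬝ᵥ ((A * B * Aᵀ) *ᵥ v) := by
  rw [Matrix.mulVec_mulVec, Matrix.mulVec_transpose, Matrix.dotProduct_mulVec,
    Matrix.vecMul_vecMul, ← Matrix.dotProduct_mulVec, Matrix.mul_assoc]

open Matrix

/-- a block-triangular linear map `g` of Ṽ, with blocks given by the matrices
`g₀, g₁, g₂` in the ordered bases 𝒮, 𝒮*, lies in `G(𝔐_k)` if and only if
(i) the linear map of V with matrix `g₀` lies in `G(𝔄_k)`,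
(ii) `γ := g₀ g₁ᵗ` is skew-symmetric, and (iii) `g₀ g₂ᵗ = Id`. -/
theorem statement2 (p : ℕ) (hp : 1 ≤ p) (k : ℕ) (hk : k ≤ p + 2)
    (g : Vt p →ₗ[ℝ] Vt p) (g0 g1 g2 : Matrix (Idx p) (Idx p) ℝ)
    (hblock1 : ∀ a : Idx p,
      g (et p (Sum.inl a)) =
        (∑ b : Idx p, g0 a b • et p (Sum.inl b)) + ∑ b : Idx p, g1 a b • et p (Sum.inr b))
    (hblock2 : ∀ a : Idx p,
      g (et p (Sum.inr a)) = ∑ b : Idx p, g2 a b • et p (Sum.inr b)) :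
    (∃ ge : Vt p ≃ₗ[ℝ] Vt p, ge.toLinearMap = g ∧ GM p k ge) ↔
      ((∃ g0e : V p ≃ₗ[ℝ] V p,
          (∀ a : Idx p, g0e (e p a) = ∑ b : Idx p, g0 a b • e p b) ∧ GA p k g0e) ∧
        g0 * g1.transpose + (g0 * g1.transpose).transpose = 0 ∧
        g0 * g2.transpose = 1) := by
  classical
  set G : Matrix (Idx p ⊕ Idx p) (Idx p ⊕ Idx p) ℝ := Matrix.fromBlocks g0 g1 0 g2 with hG
  set J : Matrix (Idx p ⊕ Idx p) (Idx p ⊕ Idx p) ℝ := Matrix.fromBlocks 0 1 1 0 with hJ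
  -- g is given by the matrix Gᵀ
  have hglin : g = Matrix.mulVecLin Gᵀ := by
    apply LinearMap.pi_ext
    intro s x
    have hx : (Pi.single s x : Vt p) = x • et p s := by
      funext t; simp [Pi.single_apply, et, mul_ite]
    rw [hx, _root_.map_smul, _root_.map_smul]
    congr 1
    cases s with
    | inl a =>
        rw [hblock1]
        funext t
        simp only [Matrix.mulVecLin_apply, Matrix.mulVec, dotProduct,
          Matrix.transpose_apply, et, Pi.add_apply, Finset.sum_apply, Pi.smul_apply,
          smul_eq_mul, mul_ite, mul_one, mul_zero, Finset.sum_ite_eq']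
        cases t <;>
          simp [hG, Matrix.fromBlocks, Finset.sum_ite_eq]
    | inr a =>
        rw [hblock2]
        funext t
        simp only [Matrix.mulVecLin_apply, Matrix.mulVec, dotProduct,
          Matrix.transpose_apply, et, Finset.sum_apply, Pi.smul_apply,
          smul_eq_mul, mul_ite, mul_one, mul_zero, Finset.sum_ite_eq']
        cases t <;>
          simp [hG, Matrix.fromBlocks, Finset.sum_ite_eq]
  have hGJGt : G * J * Gᵀ = Matrix.fromBlocks (g1 * g0ᵀ + g0 * g1ᵀ) (g0 * g2ᵀ) (g2 * g0ᵀ) 0 := by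
    simp [hG, hJ, Matrix.fromBlocks_transpose, Matrix.fromBlocks_multiply]
  have hiptiff : (∀ u v : Vt p, ipt p (g u) (g v) = ipt p u v) ↔ G * J * Gᵀ = J := by
    constructor
    · intro h
      apply mat_ext
      intro u v
      have h' := h u v
      rw [ipt_matrix, ipt_matrix, hglin] at h'
      simp only [Matrix.mulVecLin_apply, ← hJ] at h' ⊢
      rw [dot_conj] at h'
      exact h'
    · intro h u v
      rw [ipt_matrix, ipt_matrix, hglin]
      simp only [Matrix.mulVecLin_apply, ← hJ]
      rw [dot_conj, h]
  have hprj : ∀ u : Vt p, prj p (g u) = g0ᵀ *ᵥ (prj p u) := by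
    intro u
    funext b
    rw [hglin]
    simp only [prj, Matrix.mulVecLin_apply, Matrix.mulVec, dotProduct,
      Matrix.transpose_apply, Fintype.sum_sum_type, hG, Matrix.fromBlocks_apply₁₁,
      Matrix.fromBlocks_apply₂₁, Matrix.zero_apply, zero_mul, Finset.sum_const_zero,
      add_zero]
  constructor
  · rintro ⟨ge, hge, hipt, hAc⟩
    have hgeapp : ∀ u, ge u = g u := fun u => by rw [← hge]; rfl
    have hmat : G * J * Gᵀ = J := hiptiff.mp (fun u v => by
      simpa only [hgeapp] using hipt u v)
    rw [hGJGt, hJ, Matrix.fromBlocks_inj] at hmat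
    obtain ⟨h11, h12, h21, -⟩ := hmat
    have hskew : g0 * g1ᵀ + (g0 * g1ᵀ)ᵀ = 0 := by
      rw [Matrix.transpose_mul, Matrix.transpose_transpose, add_comm]
      exact h11
    have h2t0 : g2ᵀ * g0 = 1 := mul_eq_one_comm.mp h12
    have ht1 : g0ᵀ * g2 = 1 := by
      have := congrArg Matrix.transpose h2t0
      simpa [Matrix.transpose_mul] using this
    have ht2 : g2 * g0ᵀ = 1 := h21
    refine ⟨⟨LinearEquiv.ofLinear (Matrix.mulVecLin g0ᵀ) (Matrix.mulVecLin g2)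
      (by rw [← Matrix.mulVecLin_mul, ht1, Matrix.mulVecLin_one])
      (by rw [← Matrix.mulVecLin_mul, ht2, Matrix.mulVecLin_one]), ?_, ?_⟩, hskew, h12⟩
    · intro a
      funext b
      simp only [LinearEquiv.ofLinear_apply, Matrix.mulVecLin_apply, Matrix.mulVec,
        dotProduct, Matrix.transpose_apply, e, Finset.sum_apply, Pi.smul_apply,
        smul_eq_mul, mul_ite, mul_one, mul_zero, Finset.sum_ite_eq, Finset.sum_ite_eq',
        Finset.mem_univ, if_true]
    · intro i hi u v w x η
      have h := hAc i hi (Sum.elim u 0) (Sum.elim v 0) (Sum.elim w 0) (Sum.elim x 0)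
        (fun j => Sum.elim (η j) 0)
      have hprjinc : ∀ z : V p, prj p (Sum.elim z 0) = z := fun z => rfl
      simp only [hgeapp, Ac, hprj, hprjinc] at h
      simpa only [LinearEquiv.ofLinear_apply, Matrix.mulVecLin_apply] using h
  · rintro ⟨⟨g0e, hg0e, hGA⟩, hskew, h12⟩
    -- matrix identities
    have h11 : g1 * g0ᵀ + g0 * g1ᵀ = 0 := by
      rw [Matrix.transpose_mul, Matrix.transpose_transpose, add_comm] at hskew
      exact hskew
    have h2t0 : g2ᵀ * g0 = 1 := mul_eq_one_comm.mp h12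
    have ht1 : g0ᵀ * g2 = 1 := by
      have := congrArg Matrix.transpose h2t0
      simpa [Matrix.transpose_mul] using this
    have ht2 : g2 * g0ᵀ = 1 := by
      have := congrArg Matrix.transpose h12
      simpa [Matrix.transpose_mul] using this
    have hmat : G * J * Gᵀ = J := by
      rw [hGJGt, hJ, Matrix.fromBlocks_inj]
      exact ⟨h11, h12, ht2, rfl⟩
    -- g0e is given by the matrix g0ᵀ
    have happ0 : ∀ z : V p, g0e z = g0ᵀ *ᵥ z := by
      have : g0e.toLinearMap = Matrix.mulVecLin g0ᵀ := by
        apply LinearMap.pi_ext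
        intro a x
        have hx : (Pi.single a x : V p) = x • e p a := by
          funext t; simp [Pi.single_apply, e, mul_ite]
        rw [hx, _root_.map_smul, _root_.map_smul]
        congr 1
        rw [LinearEquiv.coe_coe, hg0e a]
        funext b
        simp only [Matrix.mulVecLin_apply, Matrix.mulVec, dotProduct,
          Matrix.transpose_apply, e, Finset.sum_apply, Pi.smul_apply,
          smul_eq_mul, mul_ite, mul_one, mul_zero, Finset.sum_ite_eq, Finset.sum_ite_eq',
          Finset.mem_univ, if_true]
      intro z
      rw [← LinearEquiv.coe_coe, this, Matrix.mulVecLin_apply]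
    -- explicit inverse of G
    set H : Matrix (Idx p ⊕ Idx p) (Idx p ⊕ Idx p) ℝ :=
      Matrix.fromBlocks g2ᵀ (-(g2ᵀ * (g1 * g0ᵀ))) 0 g0ᵀ with hH
    have hGH : G * H = 1 := by
      rw [hG, hH, Matrix.fromBlocks_multiply]
      rw [show g0 * -(g2ᵀ * (g1 * g0ᵀ)) + g1 * g0ᵀ = -((g0 * g2ᵀ) * (g1 * g0ᵀ)) + g1 * g0ᵀ by
        rw [Matrix.mul_neg, Matrix.mul_assoc]]
      rw [h12, Matrix.one_mul, neg_add_cancel]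
      simp [ht2, Matrix.fromBlocks_one]
    have hHG : H * G = 1 := by
      rw [hG, hH, Matrix.fromBlocks_multiply]
      rw [show g2ᵀ * g1 + -(g2ᵀ * (g1 * g0ᵀ)) * g2 = g2ᵀ * g1 + -(g2ᵀ * (g1 * (g0ᵀ * g2))) by
        rw [Matrix.neg_mul, Matrix.mul_assoc, Matrix.mul_assoc]]
      rw [ht1, Matrix.mul_one, add_neg_cancel]
      simp [h2t0, ht1, Matrix.fromBlocks_one]
    refine ⟨LinearEquiv.ofLinear g (Matrix.mulVecLin Hᵀ)
      (by rw [hglin, ← Matrix.mulVecLin_mul, ← Matrix.transpose_mul, hHG,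
        Matrix.transpose_one, Matrix.mulVecLin_one])
      (by rw [hglin, ← Matrix.mulVecLin_mul, ← Matrix.transpose_mul, hGH,
        Matrix.transpose_one, Matrix.mulVecLin_one]), rfl, ?_, ?_⟩
    · intro u v
      simp only [LinearEquiv.ofLinear_apply]
      rw [ipt_matrix, ipt_matrix, hglin]
      simp only [Matrix.mulVecLin_apply, ← hJ]
      rw [dot_conj, hmat]
    · intro i hi u v w x η
      simp only [LinearEquiv.ofLinear_apply, Ac, hprj]
      have h := hGA i hi (prj p u) (prj p v) (prj p w) (prj p x) (fun j => prj p (η j))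
      simpa only [happ0] using h
end

section
/- The symmetric bilinear form J_X(η₁,η₂) := B⁰(X,η₁,η₂,X) restricted to W := Span{Y, Ỹ, Z₁,…,Z_p, Z̃₁,…,Z̃_p} is nondegenerate of signature (p+1, p+1), and the restriction map g ↦ g|_W is a group isomorphism from the isotropy group G_X(𝔄_0) := {g ∈ G(𝔄_0) : gX = X} onto the full orthogonal group O(W, J_X|_W) = {γ ∈ GL(W) : J_X(γη₁, γη₂) = J_X(η₁, η₂) for all η₁, η₂ ∈ W}. -/
/-- The hyperplane `W = Span{Y,Ỹ,Z_i,Z̃_i}`, realized as the functions on the indices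
different from `X`. -/
abbrev Wsub (p : ℕ) : Type := {a : Idx p // a ≠ Idx.X} → ℝ

/-- The inclusion `W → V` (extension by zero on the `X`-coordinate). -/
noncomputable def inclW (p : ℕ) (w : Wsub p) : V p :=
  fun a => if h : a = Idx.X then 0 else w ⟨a, h⟩

/-- The Jacobi form `J_X(η₁,η₂) := B⁰(X,η₁,η₂,X)` on `V`. -/
noncomputable def JX (p : ℕ) (u v : V p) : ℝ :=
  Bc p 0 (e p Idx.X) u v (e p Idx.X) Fin.elim0

/-- The restriction of `J_X` to `W`. -/
noncomputable def JW (p : ℕ) (w₁ w₂ : Wsub p) : ℝ := JX p (inclW p w₁) (inclW p w₂)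

/-- The restriction to `W` of a map `g : V → V` (mapping `W` to itself). -/
noncomputable def resW (p : ℕ) (g : V p → V p) (w : Wsub p) : Wsub p :=
  fun a => g (inclW p w) a.val

/-!
Write `ξ` for the `X`-coordinate and `T0` for the split form pairing `Y` with `Ỹ` and `Zᵢ`
with `Z̃ᵢ`. Then `B⁰(u,v,w,x) = ξ(u)ξ(x)T0(v,w) - ξ(u)ξ(w)T0(v,x) - ξ(v)ξ(x)T0(u,w) +
ξ(v)ξ(w)T0(u,x)` and `T0(X, ·) = 0`, so `J_X = T0`. For `g` fixing `X`, putting `X` in the last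
slot of `g*B⁰ = B⁰` gives `ξ(ga)T0(b,c) - ξ(gb)T0(a,c) = ξ(a)T0(b,c) - ξ(b)T0(a,c)`, and testing
this on the hyperbolic pair `Y, Ỹ` shows `ξ ∘ g = ξ`. Hence the isotropy group consists exactly of
the maps `id ⊕ γ` on `V = ℝX ⊕ W` with `γ` an isometry of `J_X|_W`. In the coordinates
`(Y, Z), (Ỹ, Z̃)` the form `J_X|_W` is the hyperbolic form `∑ xᵢy'ᵢ + x'ᵢyᵢ`, which the basis
`eᵢ ± fᵢ/2` diagonalises with signature `(p+1, p+1)`.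
-/

section Hyperbolic

variable {ι : Type*} [Fintype ι] {K : Type*} [Field K]

def hyperbolicForm {R : Type*} [CommSemiring R] (u v : ι ⊕ ι → R) : R :=
  ∑ i, (u (.inl i) * v (.inr i) + v (.inl i) * u (.inr i))

/-- Sends `c` to `∑ᵢ c (inl i) • (eᵢ + fᵢ / 2) + c (inr i) • (eᵢ - fᵢ / 2)`, where `eᵢ`, `fᵢ`
are the standard basis vectors at `inl i`, `inr i`. -/
def hyperbolicDiagonalize [NeZero (2 : K)] : (ι ⊕ ι → K) ≃ₗ[K] (ι ⊕ ι → K) where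
  toFun c := Sum.elim (fun i => c (.inl i) + c (.inr i)) (fun i => 2⁻¹ * (c (.inl i) - c (.inr i)))
  invFun u := Sum.elim (fun i => 2⁻¹ * u (.inl i) + u (.inr i))
    (fun i => 2⁻¹ * u (.inl i) - u (.inr i))
  map_add' c c' := by
    funext s
    rcases s with i | i <;> simp only [Sum.elim_inl, Sum.elim_inr, Pi.add_apply] <;> ring
  map_smul' a c := by
    funext s
    rcases s with i | i <;>
      simp only [Sum.elim_inl, Sum.elim_inr, Pi.smul_apply, smul_eq_mul, RingHom.id_apply] <;> ring
  left_inv c := by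
    have : (2 : K) ≠ 0 := two_ne_zero
    funext s
    rcases s with i | i <;> simp only [Sum.elim_inl, Sum.elim_inr] <;> field_simp <;> ring
  right_inv u := by
    have : (2 : K) ≠ 0 := two_ne_zero
    funext s
    rcases s with i | i <;> simp only [Sum.elim_inl, Sum.elim_inr] <;> field_simp <;> ring

theorem hyperbolicForm_hyperbolicDiagonalize [NeZero (2 : K)] (c c' : ι ⊕ ι → K) :
    hyperbolicForm (hyperbolicDiagonalize c) (hyperbolicDiagonalize c') =
      ∑ i, (c (.inl i) * c' (.inl i) - c (.inr i) * c' (.inr i)) := by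
  have : (2 : K) ≠ 0 := two_ne_zero
  refine Finset.sum_congr rfl fun i _ => ?_
  simp only [hyperbolicDiagonalize, LinearEquiv.coe_mk, LinearMap.coe_mk, AddHom.coe_mk,
    Sum.elim_inl, Sum.elim_inr]
  field_simp
  ring

variable [DecidableEq ι]

theorem hyperbolicForm_nondegenerate {R : Type*} [CommSemiring R] (u : ι ⊕ ι → R)
    (h : ∀ v, hyperbolicForm u v = 0) : u = 0 := by
  funext s
  rcases s with i | i
  · simpa [hyperbolicForm, Pi.single_apply] using h (Pi.single (.inr i) 1)
  · simpa [hyperbolicForm, Pi.single_apply] using h (Pi.single (.inl i) 1)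

noncomputable def hyperbolicBasis [NeZero (2 : K)] : Module.Basis (ι ⊕ ι) K (ι ⊕ ι → K) :=
  (Pi.basisFun K _).map hyperbolicDiagonalize

theorem hyperbolicForm_hyperbolicBasis [NeZero (2 : K)] (s t : ι ⊕ ι) :
    hyperbolicForm (hyperbolicBasis s) (hyperbolicBasis t) =
      if s = t then Sum.elim (fun _ => (1 : K)) (fun _ => -1) s else 0 := by
  rw [hyperbolicBasis, Module.Basis.map_apply, Module.Basis.map_apply,
    hyperbolicForm_hyperbolicDiagonalize]
  rcases s with i | i <;> rcases t with j | j <;> simp [Pi.single_apply, eq_comm, apply_ite]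

end Hyperbolic

namespace JacobiIsotropy

variable {p : ℕ}

noncomputable def T0 (p : ℕ) (a b : V p) : ℝ :=
  a Idx.Y * b Idx.Yt + b Idx.Y * a Idx.Yt +
    ∑ i : Fin p, (a (Idx.Z i) * b (Idx.Zt i) + b (Idx.Z i) * a (Idx.Zt i))

theorem Bc_zero (u v w x : V p) (η : Fin 0 → V p) :
    Bc p 0 u v w x η = u Idx.X * x Idx.X * T0 p v w - u Idx.X * w Idx.X * T0 p v x -
      v Idx.X * x Idx.X * T0 p u w + v Idx.X * w Idx.X * T0 p u x := by
  simp [Bc, T, T0]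

theorem T0_eX_left (a : V p) : T0 p (e p Idx.X) a = 0 := by
  simp [T0, e]

theorem T0_eX_right (a : V p) : T0 p a (e p Idx.X) = 0 := by
  simp [T0, e]

theorem Bc_zero_eX (u v w : V p) (η : Fin 0 → V p) :
    Bc p 0 u v w (e p Idx.X) η = u Idx.X * T0 p v w - v Idx.X * T0 p u w := by
  simp [Bc_zero, T0_eX_right, e]

theorem JX_eq_T0 (u v : V p) : JX p u v = T0 p u v := by
  simp [JX, Bc_zero_eX, T0_eX_left, e]

theorem T0_map_of_GA {g : V p ≃ₗ[ℝ] V p} (hg : GA p 0 g) (hgX : g (e p Idx.X) = e p Idx.X)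
    (a b : V p) : T0 p (g a) (g b) = T0 p a b := by
  simpa [Bc_zero_eX, hgX, T0_eX_left, e] using hg 0 le_rfl (e p Idx.X) a b (e p Idx.X) Fin.elim0

theorem coord_X_map_of_GA {g : V p ≃ₗ[ℝ] V p} (hg : GA p 0 g) (hgX : g (e p Idx.X) = e p Idx.X)
    (a : V p) : g a Idx.X = a Idx.X := by
  have key (a b c : V p) :
      g a Idx.X * T0 p b c - g b Idx.X * T0 p a c = a Idx.X * T0 p b c - b Idx.X * T0 p a c := by
    simpa [Bc_zero_eX, hgX, T0_map_of_GA hg hgX] using hg 0 le_rfl a b c (e p Idx.X) Fin.elim0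
  have hY : g (e p Idx.Y) Idx.X = 0 := by
    simpa [T0, e] using key (e p Idx.Y) (e p Idx.Yt) (e p Idx.Y)
  simpa [T0, e, hY] using key a (e p Idx.Y) (e p Idx.Yt)

theorem GA_zero_of_coord_X_of_T0 {g : V p ≃ₗ[ℝ] V p} (hX : ∀ a, g a Idx.X = a Idx.X)
    (hT : ∀ a b, T0 p (g a) (g b) = T0 p a b) : GA p 0 g := by
  intro i hi u v w x η
  obtain rfl := Nat.le_zero.mp hi
  simp only [Bc_zero, hX, hT]

def projW (p : ℕ) (v : V p) : Wsub p := fun a => v a.val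

theorem inclW_X (w : Wsub p) : inclW p w Idx.X = 0 := dif_pos rfl

theorem projW_inclW (w : Wsub p) : projW p (inclW p w) = w := by
  funext a
  simp [projW, inclW, a.prop]

theorem inclW_projW {v : V p} (hv : v Idx.X = 0) : inclW p (projW p v) = v := by
  funext a
  by_cases h : a = Idx.X
  · subst h
    rw [inclW_X, hv]
  · simp [inclW, projW, h]

noncomputable def splitX (p : ℕ) : V p ≃ₗ[ℝ] ℝ × Wsub p where
  toFun v := (v Idx.X, projW p v)
  invFun q := q.1 • e p Idx.X + inclW p q.2
  map_add' _ _ := rfl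
  map_smul' _ _ := rfl
  left_inv v := by
    funext a
    by_cases h : a = Idx.X
    · subst h
      simp [inclW_X, e]
    · simp [inclW, projW, e, h]
  right_inv := by
    rintro ⟨c, w⟩
    ext a
    · simp [inclW_X, e]
    · simp [projW, inclW, e, a.prop]

theorem splitX_apply (v : V p) : splitX p v = (v Idx.X, projW p v) := rfl

theorem splitX_symm_apply (c : ℝ) (w : Wsub p) :
    (splitX p).symm (c, w) = c • e p Idx.X + inclW p w := rfl

theorem JW_eq_T0 (w₁ w₂ : Wsub p) : JW p w₁ w₂ = T0 p (inclW p w₁) (inclW p w₂) :=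
  JX_eq_T0 _ _

theorem T0_eq_JW_projW (a b : V p) : T0 p a b = JW p (projW p a) (projW p b) := by
  simp [JW_eq_T0, T0, projW, inclW]

section Restriction

variable {g : V p ≃ₗ[ℝ] V p} (hX : ∀ v, g v Idx.X = v Idx.X)
include hX

theorem inclW_resW (w : Wsub p) : inclW p (resW p g w) = g (inclW p w) :=
  inclW_projW (by rw [hX, inclW_X])

theorem resW_comp (g₁ : V p → V p) : resW p (g₁ ∘ g) = resW p g₁ ∘ resW p g := by
  funext w
  exact congrArg (fun v => projW p (g₁ v)) (inclW_resW hX w).symm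

theorem JW_resW (hT : ∀ a b, T0 p (g a) (g b) = T0 p a b) (w₁ w₂ : Wsub p) :
    JW p (resW p g w₁) (resW p g w₂) = JW p w₁ w₂ := by
  simp only [JW_eq_T0, inclW_resW hX, hT]

theorem apply_eq_splitX_symm_resW (hgX : g (e p Idx.X) = e p Idx.X) (v : V p) :
    g v = (splitX p).symm (v Idx.X, resW p g (projW p v)) := by
  conv_lhs => rw [← (splitX p).symm_apply_apply v]
  rw [splitX_apply, splitX_symm_apply, splitX_symm_apply, map_add, map_smul, hgX, inclW_resW hX]

theorem injective_resW : Function.Injective (resW p g) := by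
  refine Function.Injective.of_comp (f := inclW p) ?_
  rw [show inclW p ∘ resW p g = g ∘ inclW p from funext (inclW_resW hX)]
  exact g.injective.comp (Function.LeftInverse.injective projW_inclW)

end Restriction

noncomputable def resL (g : V p →ₗ[ℝ] V p) : Wsub p →ₗ[ℝ] Wsub p :=
  LinearMap.snd ℝ ℝ (Wsub p) ∘ₗ (splitX p).toLinearMap ∘ₗ g ∘ₗ (splitX p).symm.toLinearMap ∘ₗ
    LinearMap.inr ℝ ℝ (Wsub p)

theorem coe_resL (g : V p →ₗ[ℝ] V p) : ⇑(resL g) = resW p g := by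
  funext w
  show projW p (g ((splitX p).symm (0, w))) = projW p (g (inclW p w))
  rw [splitX_symm_apply, zero_smul, zero_add]

noncomputable def resEquiv (g : V p ≃ₗ[ℝ] V p) (hX : ∀ v, g v Idx.X = v Idx.X) :
    Wsub p ≃ₗ[ℝ] Wsub p :=
  .ofInjectiveEndo (resL g) (by rw [coe_resL]; exact injective_resW hX)

theorem coe_resEquiv (g : V p ≃ₗ[ℝ] V p) (hX : ∀ v, g v Idx.X = v Idx.X) :
    ⇑(resEquiv g hX) = resW p g :=
  coe_resL _

noncomputable def extendX (γ : Wsub p ≃ₗ[ℝ] Wsub p) : V p ≃ₗ[ℝ] V p :=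
  (splitX p).trans (((LinearEquiv.refl ℝ ℝ).prodCongr γ).trans (splitX p).symm)

section Extension

variable (γ : Wsub p ≃ₗ[ℝ] Wsub p)

theorem splitX_extendX (v : V p) : splitX p (extendX γ v) = (v Idx.X, γ (projW p v)) := by
  simp [extendX, splitX_apply]

theorem extendX_coord_X (v : V p) : extendX γ v Idx.X = v Idx.X :=
  congrArg Prod.fst (splitX_extendX γ v)

theorem projW_extendX (v : V p) : projW p (extendX γ v) = γ (projW p v) :=
  congrArg Prod.snd (splitX_extendX γ v)

theorem extendX_eX : extendX γ (e p Idx.X) = e p Idx.X := by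
  have h : projW p (e p Idx.X) = 0 := by
    funext a
    simp [projW, e, a.prop]
  apply (splitX p).injective
  rw [splitX_extendX, splitX_apply, h, map_zero]

theorem resW_extendX : resW p (extendX γ) = γ := by
  funext w
  exact (projW_extendX γ _).trans (congrArg γ (projW_inclW w))

theorem GA_extendX (hγ : ∀ w₁ w₂, JW p (γ w₁) (γ w₂) = JW p w₁ w₂) : GA p 0 (extendX γ) :=
  GA_zero_of_coord_X_of_T0 (extendX_coord_X γ) fun a b => by
    rw [T0_eq_JW_projW, projW_extendX, projW_extendX, hγ, ← T0_eq_JW_projW]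

end Extension

def hyperbolicIndex (p : ℕ) : Fin (p + 1) ⊕ Fin (p + 1) ≃ {a : Idx p // a ≠ Idx.X} where
  toFun := Sum.elim (Fin.cons ⟨Idx.Y, nofun⟩ fun i => ⟨Idx.Z i, nofun⟩)
    (Fin.cons ⟨Idx.Yt, nofun⟩ fun i => ⟨Idx.Zt i, nofun⟩)
  invFun
    | ⟨.X, h⟩ => absurd rfl h
    | ⟨.Y, _⟩ => .inl 0
    | ⟨.Z i, _⟩ => .inl i.succ
    | ⟨.Yt, _⟩ => .inr 0
    | ⟨.Zt i, _⟩ => .inr i.succ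
  left_inv := by
    rintro (j | j) <;> cases j using Fin.cases <;> rfl
  right_inv := by
    rintro ⟨_ | _ | _ | _ | _, h⟩ <;> first | rfl | exact absurd rfl h

noncomputable def hyperbolicCoords (p : ℕ) : Wsub p ≃ₗ[ℝ] (Fin (p + 1) ⊕ Fin (p + 1) → ℝ) :=
  LinearEquiv.funCongrLeft ℝ ℝ (hyperbolicIndex p)

theorem JW_eq_hyperbolicForm (w₁ w₂ : Wsub p) :
    JW p w₁ w₂ = hyperbolicForm (hyperbolicCoords p w₁) (hyperbolicCoords p w₂) := by
  simp [JW_eq_T0, T0, hyperbolicForm, hyperbolicCoords, hyperbolicIndex, Fin.sum_univ_succ,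
    LinearMap.funLeft, inclW]

theorem JW_nondegenerate (w : Wsub p) (h : ∀ w', JW p w w' = 0) : w = 0 := by
  refine (hyperbolicCoords p).map_eq_zero_iff.mp (hyperbolicForm_nondegenerate _ fun v => ?_)
  simpa [JW_eq_hyperbolicForm] using h ((hyperbolicCoords p).symm v)

theorem exists_signature_basis_JW :
    ∃ b : Module.Basis (Fin (p + 1) ⊕ Fin (p + 1)) ℝ (Wsub p), ∀ s t, JW p (b s) (b t) =
      if s = t then Sum.elim (fun _ => (1 : ℝ)) (fun _ => (-1 : ℝ)) s else 0 :=
  ⟨hyperbolicBasis.map (hyperbolicCoords p).symm, fun s t => by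
    simpa [JW_eq_hyperbolicForm] using hyperbolicForm_hyperbolicBasis s t⟩

end JacobiIsotropy

open JacobiIsotropy in
theorem statement7_general (p : ℕ) :
    (∃ b : Module.Basis (Fin (p + 1) ⊕ Fin (p + 1)) ℝ (Wsub p),
        ∀ s t, JW p (b s) (b t) =
          if s = t then Sum.elim (fun _ => (1 : ℝ)) (fun _ => (-1 : ℝ)) s else 0) ∧
    (∀ w : Wsub p, (∀ w' : Wsub p, JW p w w' = 0) → w = 0) ∧
    (∀ g : V p ≃ₗ[ℝ] V p, GA p 0 g → g (e p Idx.X) = e p Idx.X →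
        ∃ γ : Wsub p ≃ₗ[ℝ] Wsub p, ⇑γ = resW p ⇑g ∧
          ∀ w₁ w₂ : Wsub p, JW p (γ w₁) (γ w₂) = JW p w₁ w₂) ∧
    (∀ g₁ g₂ : V p ≃ₗ[ℝ] V p, GA p 0 g₁ → g₁ (e p Idx.X) = e p Idx.X →
        GA p 0 g₂ → g₂ (e p Idx.X) = e p Idx.X →
        resW p ⇑g₁ = resW p ⇑g₂ → g₁ = g₂) ∧
    (∀ γ : Wsub p ≃ₗ[ℝ] Wsub p, (∀ w₁ w₂ : Wsub p, JW p (γ w₁) (γ w₂) = JW p w₁ w₂) →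
        ∃ g : V p ≃ₗ[ℝ] V p, GA p 0 g ∧ g (e p Idx.X) = e p Idx.X ∧ resW p ⇑g = ⇑γ) ∧
    (∀ g₁ g₂ : V p ≃ₗ[ℝ] V p, GA p 0 g₁ → g₁ (e p Idx.X) = e p Idx.X →
        GA p 0 g₂ → g₂ (e p Idx.X) = e p Idx.X →
        resW p (⇑g₁ ∘ ⇑g₂) = resW p ⇑g₁ ∘ resW p ⇑g₂) := by
  refine ⟨exists_signature_basis_JW, JW_nondegenerate, ?restrict, ?injective, ?surjective, ?comp⟩
  case restrict =>
    intro g hg hgX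
    have hX := coord_X_map_of_GA hg hgX
    exact ⟨resEquiv g hX, coe_resEquiv g hX, by
      simpa only [coe_resEquiv] using JW_resW hX (T0_map_of_GA hg hgX)⟩
  case injective =>
    intro g₁ g₂ hg₁ hX₁ hg₂ hX₂ h
    ext v
    rw [apply_eq_splitX_symm_resW (coord_X_map_of_GA hg₁ hX₁) hX₁,
      apply_eq_splitX_symm_resW (coord_X_map_of_GA hg₂ hX₂) hX₂, h]
  case surjective =>
    exact fun γ hγ => ⟨extendX γ, GA_extendX γ hγ, extendX_eX γ, resW_extendX γ⟩
  case comp =>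
    exact fun g₁ g₂ _ _ hg₂ hX₂ => resW_comp (coord_X_map_of_GA hg₂ hX₂) g₁

/-- `J_X|_W` is nondegenerate of signature `(p+1,p+1)`, and the restriction
map `g ↦ g|_W` is a group isomorphism from the isotropy group
`G_X(𝔄_0) = {g ∈ G(𝔄_0) : gX = X}` onto the orthogonal group `O(W, J_X|_W)`:
it lands in `O(W, J_X|_W)`, is injective, surjective, and multiplicative. -/
theorem statement7 (p : ℕ) (hp : 1 ≤ p) :
    (∃ b : Module.Basis (Fin (p + 1) ⊕ Fin (p + 1)) ℝ (Wsub p),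
        ∀ s t, JW p (b s) (b t) =
          if s = t then Sum.elim (fun _ => (1 : ℝ)) (fun _ => (-1 : ℝ)) s else 0) ∧
    (∀ w : Wsub p, (∀ w' : Wsub p, JW p w w' = 0) → w = 0) ∧
    (∀ g : V p ≃ₗ[ℝ] V p, GA p 0 g → g (e p Idx.X) = e p Idx.X →
        ∃ γ : Wsub p ≃ₗ[ℝ] Wsub p, ⇑γ = resW p ⇑g ∧
          ∀ w₁ w₂ : Wsub p, JW p (γ w₁) (γ w₂) = JW p w₁ w₂) ∧
    (∀ g₁ g₂ : V p ≃ₗ[ℝ] V p, GA p 0 g₁ → g₁ (e p Idx.X) = e p Idx.X →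
        GA p 0 g₂ → g₂ (e p Idx.X) = e p Idx.X →
        resW p ⇑g₁ = resW p ⇑g₂ → g₁ = g₂) ∧
    (∀ γ : Wsub p ≃ₗ[ℝ] Wsub p, (∀ w₁ w₂ : Wsub p, JW p (γ w₁) (γ w₂) = JW p w₁ w₂) →
        ∃ g : V p ≃ₗ[ℝ] V p, GA p 0 g ∧ g (e p Idx.X) = e p Idx.X ∧ resW p ⇑g = ⇑γ) ∧
    (∀ g₁ g₂ : V p ≃ₗ[ℝ] V p, GA p 0 g₁ → g₁ (e p Idx.X) = e p Idx.X →
        GA p 0 g₂ → g₂ (e p Idx.X) = e p Idx.X →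
        resW p (⇑g₁ ∘ ⇑g₂) = resW p ⇑g₁ ∘ resW p ⇑g₂) :=
  statement7_general p
end

section
/- For every ξ ∈ W := Span{Y, Ỹ, Z₁,…,Z_p, Z̃₁,…,Z̃_p}, the linear functional S_ξ on V defined by S_ξ(η) := B¹(X,ξ,ξ,X;η) is identically zero if and only if b⁰(ξ) = 0. -/
/-- W := Span{Y, Ỹ, Z_1,…,Z_p, Z̃_1,…,Z̃_p} ⊆ V. -/
def Wspan (p : ℕ) : Submodule ℝ (V p) :=
  Submodule.span ℝ {v : V p | v = e p Idx.Y ∨ v = e p Idx.Yt ∨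
    (∃ i, v = e p (Idx.Z i)) ∨ ∃ i, v = e p (Idx.Zt i)}

lemma Wspan_X_eq_zero (p : ℕ) (ξ : V p) (hξ : ξ ∈ Wspan p) : ξ Idx.X = 0 := by
  induction hξ using Submodule.span_induction with
  | mem v hv =>
    rcases hv with h | h | ⟨i, h⟩ | ⟨i, h⟩ <;> subst h <;> simp [e]
  | zero => rfl
  | add a b _ _ ha hb => show a Idx.X + b Idx.X = 0; rw [ha, hb]; ring
  | smul c a _ ha => show c * a Idx.X = 0; rw [ha]; ring

/-- for `ξ ∈ W`, the linear functional `S_ξ(η) := B¹(X,ξ,ξ,X;η)` vanishes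
identically if and only if `b⁰(ξ)` = 0 (the `Y`-coefficient of ξ vanishes). -/
theorem statement8 (p : ℕ) (hp : 1 ≤ p) (ξ : V p) (hξ : ξ ∈ Wspan p) :
    (∀ η : V p, Bc p 1 (e p Idx.X) ξ ξ (e p Idx.X) (fun _ => η) = 0) ↔ ξ Idx.Y = 0 := by
  have hX : ξ Idx.X = 0 := Wspan_X_eq_zero p ξ hξ
  have hk : 1 ≤ 1 ∧ 1 ≤ p := ⟨le_refl 1, hp⟩
  have key : ∀ η : V p, Bc p 1 (e p Idx.X) ξ ξ (e p Idx.X) (fun _ => η) =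
      (ξ (Idx.Z ⟨0, hp⟩) * ξ Idx.Y + ξ Idx.Y * ξ (Idx.Z ⟨0, hp⟩)) * η Idx.Y +
        ξ Idx.Y * ξ Idx.Y * η (Idx.Z ⟨0, hp⟩) := by
    intro η
    simp only [Bc, T, hk, dif_pos, e, hX]
    have h1 : ∀ x : Fin 1, (Finset.univ.erase x) = (∅ : Finset (Fin 1)) := by decide
    simp [Fin.sum_univ_one, h1]
  constructor
  · intro h
    have h0 := h (e p (Idx.Z ⟨0, hp⟩))
    rw [key] at h0
    simp [e] at h0
    nlinarith [h0]
  · intro hY η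
    rw [key, hY]; ring
end

section
/- The double isotropy groups for k = p, p+1, p+2 coincide as subgroups of GL(V): G_{X,Y}(𝔄_p) = G_{X,Y}(𝔄_{p+1}) = G_{X,Y}(𝔄_{p+2}), where G_{X,Y}(𝔄_k) := {g ∈ G(𝔄_k) : gX = X and gY = Y}. -/
/-! For fixed `X` and `Y`, invariance of `B¹`, tested against `Z₁`, forces `g` to preserve the
coordinate functionals `X*` and `Y*`. The tensors `B^{p+1}` and `B^{p+2}` are polynomials in
`X*` and `Y*` alone, so they are then preserved automatically. -/

def PreservesBc (p i : ℕ) (g : V p ≃ₗ[ℝ] V p) : Prop :=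
  ∀ u v w x : V p, ∀ η : Fin i → V p,
    Bc p i (g u) (g v) (g w) (g x) (fun j => g (η j)) = Bc p i u v w x η

variable {p : ℕ}

lemma GA.mono {k l : ℕ} {g : V p ≃ₗ[ℝ] V p} (hg : GA p l g) (hkl : k ≤ l) : GA p k g :=
  fun i hi => hg i (hi.trans hkl)

lemma T_one (hp : 1 ≤ p) (a b : V p) (η : Fin 1 → V p) :
    T p 1 a b η = (a (Idx.Z ⟨0, hp⟩) * b Idx.Y + a Idx.Y * b (Idx.Z ⟨0, hp⟩)) * η 0 Idx.Y +
      a Idx.Y * b Idx.Y * η 0 (Idx.Z ⟨0, hp⟩) := by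
  simp [T, hp]

lemma T_of_lt {i : ℕ} (hpi : p < i) (a b : V p) (η : Fin i → V p) :
    T p i a b η = a Idx.Y * b Idx.Y * ∏ j, η j Idx.Y := by
  rw [T, dif_neg (by omega), if_neg (by omega)]

lemma preservesBc_of_lt {i : ℕ} (hpi : p < i) {g : V p ≃ₗ[ℝ] V p}
    (hX : ∀ u, g u Idx.X = u Idx.X) (hY : ∀ u, g u Idx.Y = u Idx.Y) : PreservesBc p i g := by
  intro u v w x η
  simp only [Bc, T_of_lt hpi, hX, hY]

lemma apply_X_eq_and_apply_Y_eq_of_preservesBc_one (hp : 1 ≤ p) {g : V p ≃ₗ[ℝ] V p}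
    (hg : PreservesBc p 1 g) (hX : g (e p Idx.X) = e p Idx.X)
    (hY : g (e p Idx.Y) = e p Idx.Y) :
    (∀ u, g u Idx.X = u Idx.X) ∧ (∀ u, g u Idx.Y = u Idx.Y) := by
  set Z : Idx p := Idx.Z ⟨0, hp⟩
  -- The tests: `B¹(X,Y,w,X;Y) = w_Z`, `B¹(X,Y,w,X;w) = 2 w_Z w_Y`, `B¹(u,Y,Y,X;Z) = u_X` and
  -- `B¹(X,Y,Z,X;η) = η_Y` once `(g Z)_Y = 0`.
  have hZ : ∀ w, g w Z = w Z := by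
    intro w
    simpa [Bc, T_one hp, e, hX, hY] using hg (e p Idx.X) (e p Idx.Y) w (e p Idx.X) ![e p Idx.Y]
  have hgZ_Y : g (e p Z) Idx.Y = 0 := by
    simpa [Bc, T_one hp, e, hX, hY, hZ, Z] using
      hg (e p Idx.X) (e p Idx.Y) (e p Z) (e p Idx.X) ![e p Z]
  constructor
  · intro u
    simpa [Bc, T_one hp, e, hX, hY, hZ, Z] using
      hg u (e p Idx.Y) (e p Idx.Y) (e p Idx.X) ![e p Z]
  · intro u
    simpa [Bc, T_one hp, e, hX, hY, hZ, hgZ_Y, Z] using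
      hg (e p Idx.X) (e p Idx.Y) (e p Z) (e p Idx.X) ![u]

lemma GA_of_GA_self (hp : 1 ≤ p) (k : ℕ) {g : V p ≃ₗ[ℝ] V p} (hg : GA p p g)
    (hX : g (e p Idx.X) = e p Idx.X) (hY : g (e p Idx.Y) = e p Idx.Y) : GA p k g := by
  obtain ⟨hXc, hYc⟩ := apply_X_eq_and_apply_Y_eq_of_preservesBc_one hp (hg 1 hp) hX hY
  intro i _
  rcases le_or_gt i p with hip | hpi
  · exact hg i hip
  · exact preservesBc_of_lt hpi hXc hYc

lemma doubleIsotropy_eq_of_le (hp : 1 ≤ p) {k : ℕ} (hpk : p ≤ k) :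
    {g : V p ≃ₗ[ℝ] V p | GA p k g ∧ g (e p Idx.X) = e p Idx.X ∧ g (e p Idx.Y) = e p Idx.Y} =
      {g | GA p p g ∧ g (e p Idx.X) = e p Idx.X ∧ g (e p Idx.Y) = e p Idx.Y} := by
  ext g
  exact ⟨fun ⟨hg, hX, hY⟩ => ⟨hg.mono hpk, hX, hY⟩,
    fun ⟨hg, hX, hY⟩ => ⟨GA_of_GA_self hp k hg hX hY, hX, hY⟩⟩

/-- the double isotropy groups coincide:
`G_{X,Y}(𝔄_p) = G_{X,Y}(𝔄_{p+1}) = G_{X,Y}(𝔄_{p+2})` as subgroups of GL(V). -/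
theorem statement12 (p : ℕ) (hp : 1 ≤ p) :
    ({g : V p ≃ₗ[ℝ] V p |
        GA p p g ∧ g (e p Idx.X) = e p Idx.X ∧ g (e p Idx.Y) = e p Idx.Y} =
      {g : V p ≃ₗ[ℝ] V p |
        GA p (p + 1) g ∧ g (e p Idx.X) = e p Idx.X ∧ g (e p Idx.Y) = e p Idx.Y}) ∧
    ({g : V p ≃ₗ[ℝ] V p |
        GA p (p + 1) g ∧ g (e p Idx.X) = e p Idx.X ∧ g (e p Idx.Y) = e p Idx.Y} =
      {g : V p ≃ₗ[ℝ] V p |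
        GA p (p + 2) g ∧ g (e p Idx.X) = e p Idx.X ∧ g (e p Idx.Y) = e p Idx.Y}) := by
  rw [doubleIsotropy_eq_of_le hp (by omega : p ≤ p + 1),
    doubleIsotropy_eq_of_le hp (by omega : p ≤ p + 2)]
  exact ⟨rfl, rfl⟩
end

section
/- Let 1 ≤ k ≤ p. Equip W(p) := Span{Z₁,…,Z_p, Z̃₁,…,Z̃_p} with the symmetric bilinear form b(η₁,η₂) := B⁰(X,η₁,η₂,X) (so b(Z_i,Z̃_j) = δ_{ij} and b(Z_i,Z_j) = b(Z̃_i,Z̃_j) = 0). Then the restriction map g ↦ g|_{W(p)} is a group isomorphism from G_{X,Y}(𝔄_k) := {g ∈ G(𝔄_k) : gX = X, gY = Y} onto the subgroup {γ ∈ GL(W(p)) : b(γη₁,γη₂) = b(η₁,η₂) for all η₁,η₂, and Z_i* ∘ γ = Z_i* on W(p) for 1 ≤ i ≤ k}, where Z_i* denotes the coordinate functional extracting the Z_i-coefficient. -/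
/-- The subspace W(p) := Span{Z_1,…,Z_p, Z̃_1,…,Z̃_p}, realized as ℝ^{2p}
(`Sum.inl i` ↔ Z_{i+1}, `Sum.inr i` ↔ Z̃_{i+1}). -/
abbrev Wp (p : ℕ) : Type := (Fin p ⊕ Fin p) → ℝ

/-- The basis vectors of `Wp`. -/
noncomputable def bZ (p : ℕ) (s : Fin p ⊕ Fin p) : Wp p := fun t => if t = s then 1 else 0

/-- The inclusion `W(p) → V`. -/
noncomputable def inclZ (p : ℕ) (w : Wp p) : V p := fun a =>
  match a with
  | Idx.Z i => w (Sum.inl i)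
  | Idx.Zt i => w (Sum.inr i)
  | _ => 0

/-- The restriction to `W(p)` of a map `g : V → V` preserving `W(p)`. -/
noncomputable def resZ (p : ℕ) (g : V p → V p) (w : Wp p) : Wp p := fun s =>
  match s with
  | Sum.inl i => g (inclZ p w) (Idx.Z i)
  | Sum.inr i => g (inclZ p w) (Idx.Zt i)

/-- The symmetric bilinear form `b(η₁,η₂) := B⁰(X,η₁,η₂,X)` on `W(p)`. -/
noncomputable def bF (p : ℕ) (w₁ w₂ : Wp p) : ℝ :=
  Bc p 0 (e p Idx.X) (inclZ p w₁) (inclZ p w₂) (e p Idx.X) Fin.elim0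

/-- Membership in the target group: `γ` preserves `b` and `Z_i* ∘ γ = Z_i*` for
`1 ≤ i ≤ k` (0-based: `i < k`). -/
def OZ (p k : ℕ) (γ : Wp p ≃ₗ[ℝ] Wp p) : Prop :=
  (∀ w₁ w₂ : Wp p, bF p (γ w₁) (γ w₂) = bF p w₁ w₂) ∧
    ∀ i : Fin p, (i : ℕ) < k → ∀ w : Wp p, γ w (Sum.inl i) = w (Sum.inl i)

section S14
variable {p : ℕ}

@[simp] lemma inclZ_X (w : Wp p) : inclZ p w Idx.X = 0 := rfl
@[simp] lemma inclZ_Y (w : Wp p) : inclZ p w Idx.Y = 0 := rfl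
@[simp] lemma inclZ_Yt (w : Wp p) : inclZ p w Idx.Yt = 0 := rfl
@[simp] lemma inclZ_Z (w : Wp p) (i : Fin p) : inclZ p w (Idx.Z i) = w (Sum.inl i) := rfl
@[simp] lemma inclZ_Zt (w : Wp p) (i : Fin p) : inclZ p w (Idx.Zt i) = w (Sum.inr i) := rfl

@[simp] lemma eX_Y : e p Idx.X Idx.Y = 0 := by simp [e]
@[simp] lemma eX_Yt : e p Idx.X Idx.Yt = 0 := by simp [e]
@[simp] lemma eX_X : e p Idx.X Idx.X = 1 := by simp [e]
@[simp] lemma eX_Z (i : Fin p) : e p Idx.X (Idx.Z i) = 0 := by simp [e]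
@[simp] lemma eX_Zt (i : Fin p) : e p Idx.X (Idx.Zt i) = 0 := by simp [e]
@[simp] lemma eY_Y : e p Idx.Y Idx.Y = 1 := by simp [e]
@[simp] lemma eY_Yt : e p Idx.Y Idx.Yt = 0 := by simp [e]
@[simp] lemma eY_X : e p Idx.Y Idx.X = 0 := by simp [e]
@[simp] lemma eY_Z (i : Fin p) : e p Idx.Y (Idx.Z i) = 0 := by simp [e]
@[simp] lemma eY_Zt (i : Fin p) : e p Idx.Y (Idx.Zt i) = 0 := by simp [e]
@[simp] lemma eYt_Y : e p Idx.Yt Idx.Y = 0 := by simp [e]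
@[simp] lemma eYt_Yt : e p Idx.Yt Idx.Yt = 1 := by simp [e]
@[simp] lemma eYt_X : e p Idx.Yt Idx.X = 0 := by simp [e]
@[simp] lemma eYt_Z (i : Fin p) : e p Idx.Yt (Idx.Z i) = 0 := by simp [e]
@[simp] lemma eYt_Zt (i : Fin p) : e p Idx.Yt (Idx.Zt i) = 0 := by simp [e]

lemma T0_eq (a b : V p) (η : Fin 0 → V p) :
    T p 0 a b η = a Idx.Y * b Idx.Yt + b Idx.Y * a Idx.Yt +
      ∑ i : Fin p, (a (Idx.Z i) * b (Idx.Zt i) + b (Idx.Z i) * a (Idx.Zt i)) := by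
  simp [T]

lemma T_hk_eq (m : ℕ) (h1 : 1 ≤ m) (h2 : m ≤ p) (a b : V p) (η : Fin m → V p) :
    T p m a b η =
      (a (Idx.Z ⟨m - 1, by omega⟩) * b Idx.Y + a Idx.Y * b (Idx.Z ⟨m - 1, by omega⟩)) *
          ∏ j, η j Idx.Y +
        a Idx.Y * b Idx.Y *
          ∑ j, η j (Idx.Z ⟨m - 1, by omega⟩) * ∏ l ∈ Finset.univ.erase j, η l Idx.Y :=
  dif_pos ⟨h1, h2⟩

lemma T_eX_right (m : ℕ) (a : V p) (η : Fin m → V p) : T p m a (e p Idx.X) η = 0 := by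
  unfold T
  split_ifs <;> simp

lemma T_eX_left (m : ℕ) (b : V p) (η : Fin m → V p) : T p m (e p Idx.X) b η = 0 := by
  unfold T
  split_ifs <;> simp

lemma Bc_XX (m : ℕ) (a b : V p) (η : Fin m → V p) :
    Bc p m (e p Idx.X) a b (e p Idx.X) η = T p m a b η := by
  simp [Bc, T_eX_right, T_eX_left]

end S14
section S14b
variable {p k : ℕ} {g : V p ≃ₗ[ℝ] V p}

/-- η-independent version of `T p 0`. -/
noncomputable def T0 (p : ℕ) (a b : V p) : ℝ :=
  a Idx.Y * b Idx.Yt + b Idx.Y * a Idx.Yt +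
    ∑ i : Fin p, (a (Idx.Z i) * b (Idx.Zt i) + b (Idx.Z i) * a (Idx.Zt i))

lemma T_zero_s14 (a b : V p) (η : Fin 0 → V p) : T p 0 a b η = T0 p a b := by
  simp [T, T0]

lemma Tinv (hg : GA p k g) (hX : g (e p Idx.X) = e p Idx.X) (m : ℕ) (hm : m ≤ k)
    (a b : V p) (η : Fin m → V p) :
    T p m (g a) (g b) (fun j => g (η j)) = T p m a b η := by
  have h := hg m hm (e p Idx.X) a b (e p Idx.X) η
  rwa [hX, Bc_XX, Bc_XX] at h

lemma T0inv (hg : GA p k g) (hX : g (e p Idx.X) = e p Idx.X) (a b : V p) :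
    T0 p (g a) (g b) = T0 p a b := by
  have h := Tinv hg hX 0 (Nat.zero_le k) a b Fin.elim0
  rwa [T_zero_s14, T_zero_s14] at h

lemma gX_comp (hg : GA p k g) (hX : g (e p Idx.X) = e p Idx.X)
    (hY : g (e p Idx.Y) = e p Idx.Y) (u : V p) : g u Idx.X = u Idx.X := by
  have h := hg 0 (Nat.zero_le k) u (e p Idx.Y) (e p Idx.Yt) (e p Idx.X) Fin.elim0
  rw [hX, hY] at h
  simp only [Bc, T_zero_s14] at h
  have h1 : T0 p (e p Idx.Y) (g (e p Idx.Yt)) = 1 := by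
    rw [← hY, T0inv hg hX]; simp [T0]
  have h2 : T0 p (e p Idx.Y) (e p Idx.X) = 0 := by simp [T0]
  have h3 : T0 p (e p Idx.Y) (e p Idx.Yt) = 1 := by simp [T0]
  simp only [h1, h2, h3, eY_X, eX_X, eYt_X] at h
  linarith [h]

end S14b
section S14c
variable {p k : ℕ} {g : V p ≃ₗ[ℝ] V p}

lemma Tval1 (m : ℕ) (h1 : 1 ≤ m) (h2 : m ≤ p) (u : V p) :
    T p m (e p Idx.Y) (e p Idx.Y)
      (fun j => if j = (⟨0, h1⟩ : Fin m) then u else e p Idx.Y) =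
      u (Idx.Z ⟨m - 1, by omega⟩) := by
  have hprod : ∏ l ∈ Finset.univ.erase (⟨0, h1⟩ : Fin m),
      (if l = (⟨0, h1⟩ : Fin m) then u else e p Idx.Y) Idx.Y = 1 :=
    Finset.prod_eq_one (fun l hl => by
      rw [if_neg (Finset.ne_of_mem_erase hl)]; exact eY_Y)
  rw [T_hk_eq m h1 h2]
  rw [Finset.sum_eq_single (⟨0, h1⟩ : Fin m) (fun b _ hb => by rw [if_neg hb]; simp)
    (by simp)]
  rw [if_pos rfl, hprod]
  simp

lemma gZ_comp (hg : GA p k g) (hX : g (e p Idx.X) = e p Idx.X)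
    (hY : g (e p Idx.Y) = e p Idx.Y) (hkp : k ≤ p) (u : V p) (i : Fin p)
    (hik : (i : ℕ) < k) : g u (Idx.Z i) = u (Idx.Z i) := by
  have h1 : 1 ≤ (i : ℕ) + 1 := Nat.succ_le_succ (Nat.zero_le _)
  have h2 : (i : ℕ) + 1 ≤ p := by omega
  have h := Tinv hg hX ((i : ℕ) + 1) (by omega) (e p Idx.Y) (e p Idx.Y)
    (fun j => if j = (⟨0, h1⟩ : Fin ((i : ℕ) + 1)) then u else e p Idx.Y)
  rw [hY] at h
  have hη : (fun j => g (if j = (⟨0, h1⟩ : Fin ((i : ℕ) + 1)) then u else e p Idx.Y)) =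
      fun j => if j = (⟨0, h1⟩ : Fin ((i : ℕ) + 1)) then g u else e p Idx.Y := by
    funext j; rw [apply_ite g, hY]
  rw [hη, Tval1 _ h1 h2, Tval1 _ h1 h2] at h
  exact h

lemma Tval2 (hp : 1 ≤ p) (b c : V p) :
    T p 1 (e p Idx.Y) b (fun _ => c) =
      b (Idx.Z ⟨0, hp⟩) * c Idx.Y + b Idx.Y * c (Idx.Z ⟨0, hp⟩) := by
  rw [T_hk_eq 1 le_rfl hp]
  simp [Fin.prod_univ_one, Fin.sum_univ_one]

lemma gY_comp (hg : GA p k g) (hX : g (e p Idx.X) = e p Idx.X)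
    (hY : g (e p Idx.Y) = e p Idx.Y) (hp : 1 ≤ p) (hk1 : 1 ≤ k) (hkp : k ≤ p)
    (u : V p) : g u Idx.Y = u Idx.Y := by
  have key : ∀ v : V p, v (Idx.Z ⟨0, hp⟩) * (g v Idx.Y - v Idx.Y) = 0 := by
    intro v
    have h := Tinv hg hX 1 hk1 (e p Idx.Y) v (fun _ => v)
    rw [hY] at h
    rw [Tval2 hp, Tval2 hp] at h
    have hz : g v (Idx.Z ⟨0, hp⟩) = v (Idx.Z ⟨0, hp⟩) :=
      gZ_comp hg hX hY hkp v ⟨0, hp⟩ hk1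
    rw [hz] at h
    nlinarith [h]
  have hz0 : g (e p (Idx.Z ⟨0, hp⟩)) Idx.Y = 0 := by
    have h := key (e p (Idx.Z ⟨0, hp⟩))
    simp [e] at h
    exact h
  have h1 := key (e p (Idx.Z ⟨0, hp⟩) + u)
  simp only [Pi.add_apply, map_add] at h1
  simp [e, hz0] at h1
  have h2 := key u
  rcases h1 with h1 | h1
  · linear_combination (g u Idx.Y - u Idx.Y) * h1 - h2
  · linarith
end S14c
section S14d
variable {p k : ℕ} {g : V p ≃ₗ[ℝ] V p}

lemma T0_eY_left (b : V p) : T0 p (e p Idx.Y) b = b Idx.Yt := by simp [T0]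

lemma inclZ_add (w w' : Wp p) : inclZ p (w + w') = inclZ p w + inclZ p w' := by
  funext a; cases a <;> simp [inclZ]

lemma inclZ_smul (c : ℝ) (w : Wp p) : inclZ p (c • w) = c • inclZ p w := by
  funext a; cases a <;> simp [inclZ]

lemma inclZ_zero : inclZ p (0 : Wp p) = 0 := by
  funext a; cases a <;> simp [inclZ]

lemma inclZ_inj {w w' : Wp p} (h : inclZ p w = inclZ p w') : w = w' := by
  funext s
  cases s with
  | inl i => exact congrFun h (Idx.Z i)
  | inr i => exact congrFun h (Idx.Zt i)

lemma gW (hg : GA p k g) (hX : g (e p Idx.X) = e p Idx.X)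
    (hY : g (e p Idx.Y) = e p Idx.Y) (hp : 1 ≤ p) (hk1 : 1 ≤ k) (hkp : k ≤ p)
    (w : Wp p) : g (inclZ p w) = inclZ p (resZ p g w) := by
  funext a
  cases a with
  | X => rw [gX_comp hg hX hY]; simp
  | Y => rw [gY_comp hg hX hY hp hk1 hkp]; simp
  | Yt =>
    have h := T0inv hg hX (e p Idx.Y) (inclZ p w)
    rw [hY, T0_eY_left, T0_eY_left] at h
    simpa using h
  | Z i => rfl
  | Zt i => rfl

/-- `resZ g` as a linear map. -/
noncomputable def resL (g : V p ≃ₗ[ℝ] V p) : Wp p →ₗ[ℝ] Wp p where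
  toFun := resZ p ⇑g
  map_add' w w' := by
    funext s
    cases s <;> simp [resZ, inclZ_add, map_add]
  map_smul' c w := by
    funext s
    cases s <;> simp [resZ, inclZ_smul, map_smul]

lemma resL_inj (hg : GA p k g) (hX : g (e p Idx.X) = e p Idx.X)
    (hY : g (e p Idx.Y) = e p Idx.Y) (hp : 1 ≤ p) (hk1 : 1 ≤ k) (hkp : k ≤ p) :
    Function.Injective (resL g) := by
  rw [injective_iff_map_eq_zero]
  intro w hw
  have h : g (inclZ p w) = 0 := by
    rw [gW hg hX hY hp hk1 hkp]
    have : resZ p (⇑g) w = 0 := hw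
    rw [this, inclZ_zero]
  have h2 : inclZ p w = 0 := by
    have := (LinearEquiv.map_eq_zero_iff g).mp h
    exact this
  have := inclZ_inj (w' := 0) (by rw [h2, inclZ_zero])
  exact this

lemma resL_surj (hg : GA p k g) (hX : g (e p Idx.X) = e p Idx.X)
    (hY : g (e p Idx.Y) = e p Idx.Y) (hp : 1 ≤ p) (hk1 : 1 ≤ k) (hkp : k ≤ p) :
    Function.Surjective (resL g) :=
  LinearMap.injective_iff_surjective.mp (resL_inj hg hX hY hp hk1 hkp)

lemma T0_inclZ_right (a : V p) (u : Wp p) :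
    T0 p a (inclZ p u) =
      ∑ i : Fin p, (a (Idx.Z i) * u (Sum.inr i) + u (Sum.inl i) * a (Idx.Zt i)) := by
  simp [T0]

lemma gYt (hg : GA p k g) (hX : g (e p Idx.X) = e p Idx.X)
    (hY : g (e p Idx.Y) = e p Idx.Y) (hp : 1 ≤ p) (hk1 : 1 ≤ k) (hkp : k ≤ p) :
    g (e p Idx.Yt) = e p Idx.Yt := by
  have key : ∀ u : Wp p,
      ∑ i : Fin p, (g (e p Idx.Yt) (Idx.Z i) * (resZ p (⇑g) u) (Sum.inr i) +
        (resZ p (⇑g) u) (Sum.inl i) * g (e p Idx.Yt) (Idx.Zt i)) = 0 := by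
    intro u
    have h := T0inv hg hX (e p Idx.Yt) (inclZ p u)
    rw [gW hg hX hY hp hk1 hkp, T0_inclZ_right, T0_inclZ_right] at h
    simpa using h
  funext a
  cases a with
  | X => rw [gX_comp hg hX hY]
  | Y => rw [gY_comp hg hX hY hp hk1 hkp]
  | Yt =>
    have h := T0inv hg hX (e p Idx.Y) (e p Idx.Yt)
    rw [hY, T0_eY_left, T0_eY_left] at h
    simpa using h
  | Z i =>
    obtain ⟨u, hu⟩ := resL_surj hg hX hY hp hk1 hkp (bZ p (Sum.inr i))
    have h := key u
    have hu' : resZ p (⇑g) u = bZ p (Sum.inr i) := hu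
    rw [hu'] at h
    rw [Finset.sum_eq_single i (fun b _ hb => by simp [bZ, hb]) (by simp)] at h
    simpa [bZ] using h
  | Zt i =>
    obtain ⟨u, hu⟩ := resL_surj hg hX hY hp hk1 hkp (bZ p (Sum.inl i))
    have h := key u
    have hu' : resZ p (⇑g) u = bZ p (Sum.inl i) := hu
    rw [hu'] at h
    rw [Finset.sum_eq_single i (fun b _ hb => by simp [bZ, hb]) (by simp)] at h
    simpa [bZ] using h
end S14d
section S14e
variable {p k : ℕ} {g : V p ≃ₗ[ℝ] V p}

lemma bF_T0 (u u' : Wp p) : bF p u u' = T0 p (inclZ p u) (inclZ p u') := by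
  simp only [bF]
  rw [Bc_XX, T_zero_s14]

lemma bF_eq (u u' : Wp p) :
    bF p u u' = ∑ i : Fin p,
      (u (Sum.inl i) * u' (Sum.inr i) + u' (Sum.inl i) * u (Sum.inr i)) := by
  rw [bF_T0, T0_inclZ_right]
  simp

/-- Projection of `V` onto `W(p)` coordinates. -/
noncomputable def projW (p : ℕ) (v : V p) : Wp p := fun s =>
  match s with
  | Sum.inl i => v (Idx.Z i)
  | Sum.inr i => v (Idx.Zt i)

lemma projW_inclZ (w : Wp p) : projW p (inclZ p w) = w := by
  funext s; cases s <;> rfl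

lemma decomp (v : V p) :
    v = v Idx.X • e p Idx.X + v Idx.Y • e p Idx.Y + v Idx.Yt • e p Idx.Yt +
      inclZ p (projW p v) := by
  funext a
  cases a <;> simp [e, projW, inclZ]

end S14e
section S14f
variable {p k : ℕ}

lemma projW_add (v v' : V p) : projW p (v + v') = projW p v + projW p v' := by
  funext s; cases s <;> rfl

lemma projW_smul (c : ℝ) (v : V p) : projW p (c • v) = c • projW p v := by
  funext s; cases s <;> rfl

/-- The block-diagonal extension of `γ` to `V`, as a plain map. -/
noncomputable def gmap (γ : Wp p ≃ₗ[ℝ] Wp p) : V p → V p := fun v a =>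
  match a with
  | Idx.X => v Idx.X
  | Idx.Y => v Idx.Y
  | Idx.Yt => v Idx.Yt
  | Idx.Z i => γ (projW p v) (Sum.inl i)
  | Idx.Zt i => γ (projW p v) (Sum.inr i)

lemma projW_gmap (γ : Wp p ≃ₗ[ℝ] Wp p) (v : V p) :
    projW p (gmap γ v) = γ (projW p v) := by
  funext s; cases s <;> rfl

/-- The block-diagonal extension of `γ` to `V`, as a linear equivalence. -/
noncomputable def glin (γ : Wp p ≃ₗ[ℝ] Wp p) : V p ≃ₗ[ℝ] V p where
  toFun := gmap γ
  invFun := gmap γ.symm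
  map_add' v v' := by
    funext a
    cases a <;> simp [gmap, projW_add, map_add]
  map_smul' c v := by
    funext a
    cases a <;> simp [gmap, projW_smul, map_smul]
  left_inv v := by
    funext a
    cases a with
    | X => rfl
    | Y => rfl
    | Yt => rfl
    | Z i => show γ.symm (projW p (gmap γ v)) (Sum.inl i) = _
             rw [projW_gmap, γ.symm_apply_apply]; rfl
    | Zt i => show γ.symm (projW p (gmap γ v)) (Sum.inr i) = _
              rw [projW_gmap, γ.symm_apply_apply]; rfl
  right_inv v := by
    funext a
    cases a with
    | X => rfl
    | Y => rfl
    | Yt => rfl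
    | Z i => show γ (projW p (gmap γ.symm v)) (Sum.inl i) = _
             rw [projW_gmap, γ.apply_symm_apply]; rfl
    | Zt i => show γ (projW p (gmap γ.symm v)) (Sum.inr i) = _
              rw [projW_gmap, γ.apply_symm_apply]; rfl

@[simp] lemma glin_X (γ : Wp p ≃ₗ[ℝ] Wp p) (v : V p) : glin γ v Idx.X = v Idx.X := rfl
@[simp] lemma glin_Y (γ : Wp p ≃ₗ[ℝ] Wp p) (v : V p) : glin γ v Idx.Y = v Idx.Y := rfl
@[simp] lemma glin_Yt (γ : Wp p ≃ₗ[ℝ] Wp p) (v : V p) : glin γ v Idx.Yt = v Idx.Yt := rfl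
lemma glin_Z (γ : Wp p ≃ₗ[ℝ] Wp p) (v : V p) (i : Fin p) :
    glin γ v (Idx.Z i) = γ (projW p v) (Sum.inl i) := rfl
lemma glin_Zt (γ : Wp p ≃ₗ[ℝ] Wp p) (v : V p) (i : Fin p) :
    glin γ v (Idx.Zt i) = γ (projW p v) (Sum.inr i) := rfl

lemma glin_eX (γ : Wp p ≃ₗ[ℝ] Wp p) : glin γ (e p Idx.X) = e p Idx.X := by
  have hp0 : projW p (e p Idx.X) = 0 := by funext s; cases s <;> simp [projW, e]
  funext a
  cases a with
  | X => rfl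
  | Y => rfl
  | Yt => rfl
  | Z i => rw [glin_Z, hp0, map_zero]; simp [e]
  | Zt i => rw [glin_Zt, hp0, map_zero]; simp [e]

lemma glin_eY (γ : Wp p ≃ₗ[ℝ] Wp p) : glin γ (e p Idx.Y) = e p Idx.Y := by
  have hp0 : projW p (e p Idx.Y) = 0 := by funext s; cases s <;> simp [projW, e]
  funext a
  cases a with
  | X => rfl
  | Y => rfl
  | Yt => rfl
  | Z i => rw [glin_Z, hp0, map_zero]; simp [e]
  | Zt i => rw [glin_Zt, hp0, map_zero]; simp [e]

lemma projW_glin (γ : Wp p ≃ₗ[ℝ] Wp p) (v : V p) :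
    projW p (glin γ v) = γ (projW p v) := projW_gmap γ v

lemma glin_T0 (γ : Wp p ≃ₗ[ℝ] Wp p) (hγ : OZ p k γ) (a b : V p) :
    T0 p (glin γ a) (glin γ b) = T0 p a b := by
  have hs : ∀ v w : V p,
      ∑ i : Fin p, (v (Idx.Z i) * w (Idx.Zt i) + w (Idx.Z i) * v (Idx.Zt i)) =
        bF p (projW p v) (projW p w) := by
    intro v w
    rw [bF_eq]
    rfl
  simp only [T0, glin_Y, glin_Yt]
  congr 1
  rw [hs, hs, projW_glin, projW_glin]
  exact hγ.1 _ _

lemma glin_T (γ : Wp p ≃ₗ[ℝ] Wp p) (hγ : OZ p k γ) (hkp : k ≤ p)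
    (m : ℕ) (hm : m ≤ k) (a b : V p) (η : Fin m → V p) :
    T p m (glin γ a) (glin γ b) (fun j => glin γ (η j)) = T p m a b η := by
  rcases Nat.eq_zero_or_pos m with hm0 | hm1
  · subst hm0
    rw [T_zero_s14, T_zero_s14]
    exact glin_T0 γ hγ a b
  · have h2 : m ≤ p := le_trans hm hkp
    have hzi : ((⟨m - 1, by omega⟩ : Fin p) : ℕ) < k := by
      simp only []
      omega
    have hZc : ∀ v : V p, glin γ v (Idx.Z ⟨m - 1, by omega⟩) =
        v (Idx.Z ⟨m - 1, by omega⟩) := by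
      intro v
      rw [glin_Z, hγ.2 _ hzi]
      rfl
    rw [T_hk_eq m hm1 h2, T_hk_eq m hm1 h2]
    simp only [glin_Y, hZc]

lemma glin_GA (γ : Wp p ≃ₗ[ℝ] Wp p) (hγ : OZ p k γ) (hkp : k ≤ p) :
    GA p k (glin γ) := by
  intro m hm u v w x η
  simp only [Bc, glin_X, glin_T γ hγ hkp m hm]

lemma resZ_glin (γ : Wp p ≃ₗ[ℝ] Wp p) : resZ p ⇑(glin γ) = ⇑γ := by
  funext w s
  cases s with
  | inl i => show glin γ (inclZ p w) (Idx.Z i) = _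
             rw [glin_Z, projW_inclZ]
  | inr i => show glin γ (inclZ p w) (Idx.Zt i) = _
             rw [glin_Zt, projW_inclZ]

end S14f
/-- `b(Z_i,Z̃_j) = δ_{ij}`, `b(Z_i,Z_j) = b(Z̃_i,Z̃_j) = 0`, and for
`1 ≤ k ≤ p` the restriction map `g ↦ g|_{W(p)}` is a group isomorphism from
`G_{X,Y}(𝔄_k)` onto `{γ ∈ GL(W(p)) : γ preserves b and Z_i* ∘ γ = Z_i* for 1 ≤ i ≤ k}`:
it lands in that group, is injective, surjective, and multiplicative. -/
theorem statement14 (p k : ℕ) (hp : 1 ≤ p) (hk1 : 1 ≤ k) (hk2 : k ≤ p) :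
    (∀ i j : Fin p,
        bF p (bZ p (Sum.inl i)) (bZ p (Sum.inr j)) = if i = j then 1 else 0) ∧
    (∀ i j : Fin p, bF p (bZ p (Sum.inl i)) (bZ p (Sum.inl j)) = 0) ∧
    (∀ i j : Fin p, bF p (bZ p (Sum.inr i)) (bZ p (Sum.inr j)) = 0) ∧
    (∀ g : V p ≃ₗ[ℝ] V p,
        GA p k g → g (e p Idx.X) = e p Idx.X → g (e p Idx.Y) = e p Idx.Y →
        ∃ γ : Wp p ≃ₗ[ℝ] Wp p, ⇑γ = resZ p ⇑g ∧ OZ p k γ) ∧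
    (∀ g₁ g₂ : V p ≃ₗ[ℝ] V p,
        GA p k g₁ → g₁ (e p Idx.X) = e p Idx.X → g₁ (e p Idx.Y) = e p Idx.Y →
        GA p k g₂ → g₂ (e p Idx.X) = e p Idx.X → g₂ (e p Idx.Y) = e p Idx.Y →
        resZ p ⇑g₁ = resZ p ⇑g₂ → g₁ = g₂) ∧
    (∀ γ : Wp p ≃ₗ[ℝ] Wp p, OZ p k γ →
        ∃ g : V p ≃ₗ[ℝ] V p,
          (GA p k g ∧ g (e p Idx.X) = e p Idx.X ∧ g (e p Idx.Y) = e p Idx.Y) ∧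
          resZ p ⇑g = ⇑γ) ∧
    (∀ g₁ g₂ : V p ≃ₗ[ℝ] V p,
        GA p k g₁ → g₁ (e p Idx.X) = e p Idx.X → g₁ (e p Idx.Y) = e p Idx.Y →
        GA p k g₂ → g₂ (e p Idx.X) = e p Idx.X → g₂ (e p Idx.Y) = e p Idx.Y →
        resZ p (⇑g₁ ∘ ⇑g₂) = resZ p ⇑g₁ ∘ resZ p ⇑g₂) := by
  refine ⟨?_, ?_, ?_, ?_, ?_, ?_, ?_⟩
  · intro i j
    rw [bF_eq]
    simp [bZ, Finset.sum_ite_eq, eq_comm]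
  · intro i j
    rw [bF_eq]
    simp [bZ]
  · intro i j
    rw [bF_eq]
    simp [bZ]
  · intro g hg hX hY
    refine ⟨LinearEquiv.ofBijective (resL g)
      ⟨resL_inj hg hX hY hp hk1 hk2, resL_surj hg hX hY hp hk1 hk2⟩, rfl, ?_, ?_⟩
    · intro w₁ w₂
      show bF p (resZ p (⇑g) w₁) (resZ p (⇑g) w₂) = bF p w₁ w₂
      rw [bF_T0, bF_T0, ← gW hg hX hY hp hk1 hk2, ← gW hg hX hY hp hk1 hk2,
        T0inv hg hX]
    · intro i hik w
      show g (inclZ p w) (Idx.Z i) = w (Sum.inl i)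
      rw [gZ_comp hg hX hY hk2 _ i hik]
      rfl
  · intro g₁ g₂ hg₁ hX₁ hY₁ hg₂ hX₂ hY₂ hres
    apply LinearEquiv.ext
    intro v
    have h1 : g₁ v = g₁ (v Idx.X • e p Idx.X + v Idx.Y • e p Idx.Y +
        v Idx.Yt • e p Idx.Yt + inclZ p (projW p v)) := by rw [← decomp]
    have h2 : g₂ v = g₂ (v Idx.X • e p Idx.X + v Idx.Y • e p Idx.Y +
        v Idx.Yt • e p Idx.Yt + inclZ p (projW p v)) := by rw [← decomp]
    rw [h1, h2]
    simp only [map_add, map_smul, hX₁, hY₁, hX₂, hY₂,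
      gYt hg₁ hX₁ hY₁ hp hk1 hk2, gYt hg₂ hX₂ hY₂ hp hk1 hk2,
      gW hg₁ hX₁ hY₁ hp hk1 hk2, gW hg₂ hX₂ hY₂ hp hk1 hk2, hres]
  · intro γ hγ
    exact ⟨glin γ, ⟨glin_GA γ hγ hk2, glin_eX γ, glin_eY γ⟩, resZ_glin γ⟩
  · intro g₁ g₂ hg₁ hX₁ hY₁ hg₂ hX₂ hY₂
    funext w s
    have h2 := gW hg₂ hX₂ hY₂ hp hk1 hk2 w
    cases s with
    | inl i =>
      show (⇑g₁ ∘ ⇑g₂) (inclZ p w) (Idx.Z i) =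
        g₁ (inclZ p (resZ p (⇑g₂) w)) (Idx.Z i)
      rw [Function.comp_apply, h2]
    | inr i =>
      show (⇑g₁ ∘ ⇑g₂) (inclZ p w) (Idx.Zt i) =
        g₁ (inclZ p (resZ p (⇑g₂) w)) (Idx.Zt i)
      rw [Function.comp_apply, h2]
end

section
/- Let 1 ≤ k ≤ p. The orbit of β̃₁ under 𝒪(p,k) is exactly 𝒲(p,k) := {ξ ∈ 𝒲(p) : ⟨ξ,ξ⟩ = 0, ⟨ξ,β₁⟩ = 1, and ⟨ξ,β_i⟩ = 0 for 2 ≤ i ≤ k}; that is, for every ξ ∈ 𝒲(p,k) there exists h ∈ 𝒪(p,k) with hβ̃₁ = ξ, and conversely hβ̃₁ ∈ 𝒲(p,k) for every h ∈ 𝒪(p,k). -/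
/-- 𝒲(p) := ℝ^{2p}; `Sum.inl i` labels the basis vector β_{i+1} and `Sum.inr i` labels
β̃_{i+1} (0-based indexing). -/
abbrev Wc (p : ℕ) : Type := (Fin p ⊕ Fin p) → ℝ

/-- The basis vectors β_i (`Sum.inl`) and β̃_i (`Sum.inr`) of 𝒲(p). -/
noncomputable def bb (p : ℕ) (s : Fin p ⊕ Fin p) : Wc p := fun t => if t = s then 1 else 0

/-- The symmetric bilinear form on 𝒲(p): ⟨β_i,β_j⟩ = ⟨β̃_i,β̃_j⟩ = 0, ⟨β_i,β̃_j⟩ = δ_{ij}. -/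
noncomputable def wip (p : ℕ) (u v : Wc p) : ℝ :=
  ∑ i : Fin p, (u (Sum.inl i) * v (Sum.inr i) + u (Sum.inr i) * v (Sum.inl i))

/-- `Ocal p k h` means `h ∈ 𝒪(p,k)`: `h` preserves ⟨·,·⟩ and fixes β_1, …, β_k. -/
def Ocal (p k : ℕ) (h : Wc p ≃ₗ[ℝ] Wc p) : Prop :=
  (∀ u v : Wc p, wip p (h u) (h v) = wip p u v) ∧
    ∀ i : Fin p, (i : ℕ) < k → h (bb p (Sum.inl i)) = bb p (Sum.inl i)

lemma wip_comm (p : ℕ) (u v : Wc p) : wip p u v = wip p v u := by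
  unfold wip; apply Finset.sum_congr rfl; intros; ring

lemma wip_bb_inl (p : ℕ) (u : Wc p) (j : Fin p) : wip p u (bb p (Sum.inl j)) = u (Sum.inr j) := by
  simp [wip, bb, Finset.sum_ite_eq']

lemma wip_bb_inr (p : ℕ) (u : Wc p) (j : Fin p) : wip p u (bb p (Sum.inr j)) = u (Sum.inl j) := by
  simp [wip, bb, Finset.sum_ite_eq']

lemma wip_add_right (p : ℕ) (u v w : Wc p) : wip p u (v + w) = wip p u v + wip p u w := by
  unfold wip; rw [← Finset.sum_add_distrib]; apply Finset.sum_congr rfl; intros; simp; ring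

lemma wip_sub_right (p : ℕ) (u v w : Wc p) : wip p u (v - w) = wip p u v - wip p u w := by
  unfold wip; rw [← Finset.sum_sub_distrib]; apply Finset.sum_congr rfl; intros; simp; ring

lemma wip_smul_right (p : ℕ) (c : ℝ) (u v : Wc p) : wip p u (c • v) = c * wip p u v := by
  unfold wip; rw [Finset.mul_sum]; apply Finset.sum_congr rfl; intros; simp; ring

lemma wip_add_left (p : ℕ) (u v w : Wc p) : wip p (u + v) w = wip p u w + wip p v w := by
  rw [wip_comm, wip_add_right, wip_comm p w, wip_comm p w]

lemma wip_sub_left (p : ℕ) (u v w : Wc p) : wip p (u - v) w = wip p u w - wip p v w := by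
  rw [wip_comm, wip_sub_right, wip_comm p w, wip_comm p w]

lemma wip_smul_left (p : ℕ) (c : ℝ) (u v : Wc p) : wip p (c • u) v = c * wip p u v := by
  rw [wip_comm, wip_smul_right, wip_comm]

noncomputable def Fmap (p : ℕ) (z : Fin p) (ξ : Wc p) : Wc p →ₗ[ℝ] Wc p where
  toFun u := u + u (Sum.inr z) • (ξ - bb p (Sum.inr z))
      - (wip p ξ u - u (Sum.inl z) - ξ (Sum.inl z) * u (Sum.inr z)) • bb p (Sum.inl z)
  map_add' u v := by
    funext t
    simp only [wip_add_right, Pi.add_apply, Pi.sub_apply, Pi.smul_apply, smul_eq_mul]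
    ring
  map_smul' c u := by
    funext t
    simp only [wip_smul_right, Pi.add_apply, Pi.sub_apply, Pi.smul_apply, smul_eq_mul,
      RingHom.id_apply]
    ring

noncomputable def Gmap (p : ℕ) (z : Fin p) (ξ : Wc p) : Wc p →ₗ[ℝ] Wc p where
  toFun v := v - v (Sum.inr z) • (ξ - bb p (Sum.inr z))
      + (wip p ξ v - v (Sum.inl z) + ξ (Sum.inl z) * v (Sum.inr z)) • bb p (Sum.inl z)
  map_add' u v := by
    funext t
    simp only [wip_add_right, Pi.add_apply, Pi.sub_apply, Pi.smul_apply, smul_eq_mul]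
    ring
  map_smul' c u := by
    funext t
    simp only [wip_smul_right, Pi.add_apply, Pi.sub_apply, Pi.smul_apply, smul_eq_mul,
      RingHom.id_apply]
    ring

lemma bb_ne (p : ℕ) (z j : Fin p) : bb p (Sum.inl j) (Sum.inr z) = 0 := by simp [bb]
lemma bb_ne' (p : ℕ) (z j : Fin p) : bb p (Sum.inr j) (Sum.inl z) = 0 := by simp [bb]
lemma bb_self (p : ℕ) (s : Fin p ⊕ Fin p) : bb p s s = 1 := by simp [bb]

lemma FG (p : ℕ) (z : Fin p) (ξ : Wc p) (h0 : wip p ξ ξ = 0) (h1 : ξ (Sum.inr z) = 1) :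
    ∀ u, Fmap p z ξ (Gmap p z ξ u) = u := by
  intro u
  simp only [Fmap, Gmap, LinearMap.coe_mk, AddHom.coe_mk]
  have e1 : (wip p ξ (u - u (Sum.inr z) • (ξ - bb p (Sum.inr z))
      + (wip p ξ u - u (Sum.inl z) + ξ (Sum.inl z) * u (Sum.inr z)) • bb p (Sum.inl z)))
      = wip p ξ u + ξ (Sum.inl z) * u (Sum.inr z)
      + (wip p ξ u - u (Sum.inl z) + ξ (Sum.inl z) * u (Sum.inr z)) := by
    rw [wip_add_right, wip_sub_right, wip_smul_right, wip_smul_right, wip_sub_right,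
      wip_bb_inl, wip_bb_inr, h0, h1]
    ring
  funext t
  rw [e1]
  simp only [Pi.add_apply, Pi.sub_apply, Pi.smul_apply, smul_eq_mul, bb_ne, bb_ne', bb_self, h1]
  ring

lemma GF (p : ℕ) (z : Fin p) (ξ : Wc p) (h0 : wip p ξ ξ = 0) (h1 : ξ (Sum.inr z) = 1) :
    ∀ u, Gmap p z ξ (Fmap p z ξ u) = u := by
  intro u
  simp only [Fmap, Gmap, LinearMap.coe_mk, AddHom.coe_mk]
  have e1 : (wip p ξ (u + u (Sum.inr z) • (ξ - bb p (Sum.inr z))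
      - (wip p ξ u - u (Sum.inl z) - ξ (Sum.inl z) * u (Sum.inr z)) • bb p (Sum.inl z)))
      = wip p ξ u - ξ (Sum.inl z) * u (Sum.inr z)
      - (wip p ξ u - u (Sum.inl z) - ξ (Sum.inl z) * u (Sum.inr z)) := by
    rw [wip_sub_right, wip_add_right, wip_smul_right, wip_smul_right, wip_sub_right,
      wip_bb_inl, wip_bb_inr, h0, h1]
    ring
  funext t
  rw [e1]
  simp only [Pi.add_apply, Pi.sub_apply, Pi.smul_apply, smul_eq_mul, bb_ne, bb_ne', bb_self, h1]
  ring

lemma wip_bb_inl_left (p : ℕ) (u : Wc p) (j : Fin p) :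
    wip p (bb p (Sum.inl j)) u = u (Sum.inr j) := by rw [wip_comm, wip_bb_inl]
lemma wip_bb_inr_left (p : ℕ) (u : Wc p) (j : Fin p) :
    wip p (bb p (Sum.inr j)) u = u (Sum.inl j) := by rw [wip_comm, wip_bb_inr]

lemma Fpres (p : ℕ) (z : Fin p) (ξ : Wc p) (h0 : wip p ξ ξ = 0) (h1 : ξ (Sum.inr z) = 1) :
    ∀ u v, wip p (Fmap p z ξ u) (Fmap p z ξ v) = wip p u v := by
  intro u v
  simp only [Fmap, LinearMap.coe_mk, AddHom.coe_mk, wip_add_left, wip_sub_left, wip_smul_left,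
    wip_add_right, wip_sub_right, wip_smul_right, wip_bb_inl, wip_bb_inr, wip_bb_inl_left,
    wip_bb_inr_left, h0, h1, Pi.sub_apply]
  simp only [Pi.add_apply, Pi.sub_apply, Pi.smul_apply, smul_eq_mul, bb_ne, bb_ne', bb_self, h1]
  rw [wip_comm p u ξ]
  ring

/-- for `1 ≤ k ≤ p`, the orbit of β̃₁ under 𝒪(p,k) is exactly
`𝒲(p,k) = {ξ : ⟨ξ,ξ⟩ = 0, ⟨ξ,β₁⟩ = 1, ⟨ξ,β_i⟩ = 0 for 2 ≤ i ≤ k}`. -/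
theorem statement17 (p k : ℕ) (hp : 1 ≤ p) (hk1 : 1 ≤ k) (hk2 : k ≤ p) :
    {ξ : Wc p | ∃ h : Wc p ≃ₗ[ℝ] Wc p, Ocal p k h ∧ h (bb p (Sum.inr ⟨0, hp⟩)) = ξ} =
      {ξ : Wc p | wip p ξ ξ = 0 ∧ wip p ξ (bb p (Sum.inl ⟨0, hp⟩)) = 1 ∧
        ∀ i : Fin p, 1 ≤ (i : ℕ) → (i : ℕ) < k → wip p ξ (bb p (Sum.inl i)) = 0} := by
  set z : Fin p := ⟨0, hp⟩ with hz
  ext ξ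
  simp only [Set.mem_setOf_eq]
  constructor
  · rintro ⟨h, ⟨hpres, hfix⟩, rfl⟩
    have hzk : (z : ℕ) < k := hk1
    have hfz := hfix z hzk
    refine ⟨?_, ?_, ?_⟩
    · rw [hpres, wip_bb_inr, bb_ne']
    · have := hpres (bb p (Sum.inr z)) (bb p (Sum.inl z))
      rw [hfz] at this
      rw [this, wip_bb_inl, bb_self]
    · intro i hi1 hik
      have := hpres (bb p (Sum.inr z)) (bb p (Sum.inl i))
      rw [hfix i hik] at this
      rw [this, wip_bb_inl]
      have : Sum.inr i ≠ (Sum.inr z : Fin p ⊕ Fin p) := by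
        simp only [ne_eq, Sum.inr.injEq]
        intro h'
        rw [h'] at hi1
        simp [hz] at hi1
      simp [bb, this]
  · rintro ⟨h0, h1', hK⟩
    have h1 : ξ (Sum.inr z) = 1 := by rw [← wip_bb_inl p ξ z]; exact h1'
    refine ⟨LinearEquiv.ofLinear (Fmap p z ξ) (Gmap p z ξ)
      (LinearMap.ext fun u => FG p z ξ h0 h1 u)
      (LinearMap.ext fun u => GF p z ξ h0 h1 u), ⟨?_, ?_⟩, ?_⟩
    · intro u v
      simp only [LinearEquiv.ofLinear_apply]
      exact Fpres p z ξ h0 h1 u v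
    · intro i hik
      simp only [LinearEquiv.ofLinear_apply]
      have key : ξ (Sum.inr i) = bb p (Sum.inl i) (Sum.inl z) := by
        by_cases hiz : i = z
        · subst hiz; rw [h1, bb_self]
        · have hi1 : 1 ≤ (i : ℕ) := by
            rcases Nat.eq_zero_or_pos (i : ℕ) with h' | h'
            · exact absurd (Fin.ext h' : i = z) hiz
            · exact h'
          have := hK i hi1 hik
          rw [wip_bb_inl] at this
          rw [this]
          have : (Sum.inl z : Fin p ⊕ Fin p) ≠ Sum.inl i := by
            simp only [ne_eq, Sum.inl.injEq]
            exact fun h' => hiz (h'.symm)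
          simp [bb, this]
      show Fmap p z ξ (bb p (Sum.inl i)) = bb p (Sum.inl i)
      funext t
      simp only [Fmap, LinearMap.coe_mk, AddHom.coe_mk, Pi.add_apply, Pi.sub_apply,
        Pi.smul_apply, smul_eq_mul, wip_bb_inl, bb_ne, key]
      ring
    · show Fmap p z ξ (bb p (Sum.inr z)) = ξ
      funext t
      simp only [Fmap, LinearMap.coe_mk, AddHom.coe_mk, Pi.add_apply, Pi.sub_apply,
        Pi.smul_apply, smul_eq_mul, wip_bb_inr, bb_self, bb_ne']
      ring
end
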